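/- arXiv:2401.15678 — 5 statements merged into one kernel-verified Lean document; each statement's English description precedes it below -/
import Mathlib

section
/- When C = 𝔽_2^n with the standard basis choice (g_0 = 𝟙_n, g_i = e_i for 1 ≤ i ≤ n-1), the code C^{⊗[r,m]} equals, up to a fixed permutation of coordinates, the Dual Berman code DB_n(r,m), defined recursively by DB_n(m,m) = 𝔽_2^{n^m}, DB_n(0,m) = the repetition code, and DB_n(r,m) = {(d_0+d_1 | d_0+d_2 | ... | d_0+d_{n-1} | d_0) : d_0 ∈ DB_n(r,m-1), d_ℓ ∈ DB_n(r-1,m-1)} for 1 ≤ r ≤ m-1. -/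
/-- The all-ones vector in `𝔽₂ⁿ`. -/
def allOnes (n : ℕ) : Fin n → ZMod 2 := fun _ => 1

/-- The Kronecker product `g_{j₀} ⊗ ⋯ ⊗ g_{j_{m-1}}`, with coordinates of `𝔽₂^{nᵐ}`
indexed by tuples `i ∈ {0,…,n-1}ᵐ`: its `i`-th entry is `∏_ℓ g_{j_ℓ, i_ℓ}`. -/
def bvec {n k : ℕ} {ι : Type} [Fintype ι] (g : Fin k → Fin n → ZMod 2)
    (j : ι → Fin k) : (ι → Fin n) → ZMod 2 :=
  fun i => ∏ ℓ, g (j ℓ) (i ℓ)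

/-- The recursive subproduct code `C^{⊗[r,m]}`: span of all `b_j` with `wt(j) ≤ r`. -/
def subprod (n k : ℕ) [NeZero k] (r : ℕ) (ι : Type) [Fintype ι] [DecidableEq ι]
    (g : Fin k → Fin n → ZMod 2) : Submodule (ZMod 2) ((ι → Fin n) → ZMod 2) :=
  Submodule.span (ZMod 2)
    {c | ∃ j : ι → Fin k, (Finset.univ.filter fun ℓ => j ℓ ≠ 0).card ≤ r ∧ c = bvec g j}

/-- Kronecker product `d ⊗ a` of `d ∈ 𝔽₂^{nᵐ}` with `a ∈ 𝔽₂ⁿ`. -/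
def tens2 {n m : ℕ} (d : (Fin m → Fin n) → ZMod 2) (a : Fin n → ZMod 2) :
    (Fin (m + 1) → Fin n) → ZMod 2 :=
  fun i => d (Fin.init i) * a (i (Fin.last m))

section Aux

variable {n : ℕ} [NeZero n]

/-- weight splits at the first coordinate -/
lemma wt_succ {m : ℕ} (j : Fin (m+1) → Fin n) :
    (Finset.univ.filter fun ℓ => j ℓ ≠ 0).card
      = (if j 0 ≠ 0 then 1 else 0)
        + (Finset.univ.filter fun ℓ : Fin m => Fin.tail j ℓ ≠ 0).card := by
  rw [Finset.card_filter, Finset.card_filter, Fin.sum_univ_succ]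
  rfl

lemma bvec_split {m : ℕ} (g : Fin n → Fin n → ZMod 2) (j i : Fin (m+1) → Fin n) :
    bvec g j i = g (j 0) (i 0) * bvec g (Fin.tail j) (Fin.tail i) := by
  simp [bvec, Fin.prod_univ_succ, Fin.tail]

lemma subprod_eq_of_le {m r : ℕ} (hm : m ≤ r) (g : Fin n → Fin n → ZMod 2) :
    subprod n n r (Fin m) g = subprod n n m (Fin m) g := by
  unfold subprod
  congr 1
  ext c
  constructor <;> rintro ⟨j, hj, rfl⟩ <;>
  · have hc : (Finset.univ.filter fun ℓ => j ℓ ≠ 0).card ≤ m :=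
      (Finset.card_filter_le _ _).trans (by simp)
    exact ⟨j, by omega, rfl⟩

/-- the decomposition lemma -/
lemma mem_subprod_succ {m r : ℕ} (hr : 1 ≤ r) (g : Fin n → Fin n → ZMod 2)
    (hg0 : g 0 = allOnes n) (hgi : ∀ i : Fin n, i ≠ 0 → g i = fun t => if t = i then 1 else 0)
    (c : (Fin (m+1) → Fin n) → ZMod 2) :
    c ∈ subprod n n r (Fin (m+1)) g ↔
      ∃ (f : (Fin m → Fin n) → ZMod 2) (h : Fin n → (Fin m → Fin n) → ZMod 2),
        f ∈ subprod n n r (Fin m) g ∧ (∀ t, h t ∈ subprod n n (r-1) (Fin m) g) ∧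
        h 0 = 0 ∧ c = fun j => f (Fin.tail j) + h (j 0) (Fin.tail j) := by
  constructor
  · intro hc
    induction hc using Submodule.span_induction with
    | mem x hx =>
      obtain ⟨j, hj, rfl⟩ := hx
      rw [wt_succ] at hj
      by_cases h0 : j 0 = 0
      · refine ⟨bvec g (Fin.tail j), 0, Submodule.subset_span ⟨Fin.tail j, by simpa [h0] using hj, rfl⟩,
          fun t => zero_mem _, rfl, ?_⟩
        funext i
        rw [bvec_split, h0, hg0]
        simp [allOnes]
      · refine ⟨0, Pi.single (j 0) (bvec g (Fin.tail j)), zero_mem _, ?_, ?_, ?_⟩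
        · intro t
          rcases eq_or_ne t (j 0) with rfl | ht
          · rw [Pi.single_eq_same]
            refine Submodule.subset_span ⟨Fin.tail j, ?_, rfl⟩
            rw [if_pos h0] at hj
            simp only [ne_eq] at hj ⊢
            omega
          · rw [Pi.single_eq_of_ne ht]; exact zero_mem _
        · exact Pi.single_eq_of_ne (Ne.symm h0) _
        · funext i
          rw [bvec_split, hgi _ h0]
          rcases eq_or_ne (i 0) (j 0) with he | he
          · simp [he, Pi.single_eq_same]
          · simp [he, Pi.single_eq_of_ne he]
    | zero => exact ⟨0, 0, zero_mem _, fun t => zero_mem _, rfl, by funext i; simp⟩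
    | add x y hx hy ihx ihy =>
      obtain ⟨f1, h1, hf1, hh1, h01, rfl⟩ := ihx
      obtain ⟨f2, h2, hf2, hh2, h02, rfl⟩ := ihy
      refine ⟨f1 + f2, h1 + h2, add_mem hf1 hf2, fun t => add_mem (hh1 t) (hh2 t),
        by simp [h01, h02], ?_⟩
      funext i
      simp only [Pi.add_apply]
      ring
    | smul a x hx ihx =>
      obtain ⟨f, h, hf, hh, h0, rfl⟩ := ihx
      refine ⟨a • f, a • h, Submodule.smul_mem _ _ hf, fun t => Submodule.smul_mem _ _ (hh t),
        by simp [h0], ?_⟩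
      funext i
      simp [mul_add]
  · rintro ⟨f, h, hf, hh, h0, rfl⟩
    have claim1 : (fun j : Fin (m+1) → Fin n => f (Fin.tail j)) ∈ subprod n n r (Fin (m+1)) g := by
      induction hf using Submodule.span_induction with
      | mem x hx =>
        obtain ⟨j, hj, rfl⟩ := hx
        refine Submodule.subset_span ⟨Fin.cons 0 j, ?_, ?_⟩
        · rw [wt_succ]; simpa using hj
        · funext i
          rw [bvec_split]
          simp [hg0, allOnes, Fin.tail_cons]
      | zero => exact zero_mem _
      | add x y hx hy ihx ihy => exact add_mem ihx ihy
      | smul a x hx ihx => exact Submodule.smul_mem _ _ ihx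
    have claim2 : ∀ t : Fin n, t ≠ 0 → ∀ h' , h' ∈ subprod n n (r-1) (Fin m) g →
        (fun j : Fin (m+1) → Fin n => if j 0 = t then h' (Fin.tail j) else 0)
          ∈ subprod n n r (Fin (m+1)) g := by
      intro t ht h' hh'
      induction hh' using Submodule.span_induction with
      | mem x hx =>
        obtain ⟨j, hj, rfl⟩ := hx
        refine Submodule.subset_span ⟨Fin.cons t j, ?_, ?_⟩
        · rw [wt_succ]
          simp only [Fin.cons_zero, Fin.tail_cons, if_pos ht]
          simp only [ne_eq] at hj ⊢
          omega
        · funext i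
          rw [bvec_split]
          simp only [Fin.cons_zero, Fin.tail_cons, hgi t ht]
          by_cases hi : i 0 = t <;> simp [hi]
      | zero =>
        have : (fun j : Fin (m+1) → Fin n =>
            if j 0 = t then (0 : (Fin m → Fin n) → ZMod 2) (Fin.tail j) else 0) = 0 := by
          funext i; simp
        rw [this]; exact zero_mem _
      | add x y hx hy ihx ihy =>
        have : (fun j : Fin (m+1) → Fin n => if j 0 = t then (x + y) (Fin.tail j) else 0)
            = (fun j => if j 0 = t then x (Fin.tail j) else 0)
              + fun j => if j 0 = t then y (Fin.tail j) else 0 := by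
          funext i; by_cases hi : i 0 = t <;> simp [hi]
        rw [this]; exact add_mem ihx ihy
      | smul a x hx ihx =>
        have : (fun j : Fin (m+1) → Fin n => if j 0 = t then (a • x) (Fin.tail j) else 0)
            = a • fun j => if j 0 = t then x (Fin.tail j) else 0 := by
          funext i; by_cases hi : i 0 = t <;> simp [hi]
        rw [this]; exact Submodule.smul_mem _ _ ihx
    have : (fun j : Fin (m+1) → Fin n => f (Fin.tail j) + h (j 0) (Fin.tail j))
        = (fun j : Fin (m+1) → Fin n => f (Fin.tail j))
          + ∑ t : Fin n, fun j : Fin (m+1) → Fin n => if j 0 = t then h t (Fin.tail j) else 0 := by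
      funext i
      simp only [Pi.add_apply, Finset.sum_apply]
      rw [Finset.sum_ite_eq]
      simp
    rw [this]
    refine add_mem claim1 (Submodule.sum_mem _ fun t _ => ?_)
    rcases eq_or_ne t 0 with rfl | ht
    · have : (fun j : Fin (m+1) → Fin n => if j 0 = 0 then h 0 (Fin.tail j) else 0) = 0 := by
        funext i; simp [h0]
      rw [this]; exact zero_mem _
    · exact claim2 t ht (h t) (hh t)

lemma subprod_full (g : Fin n → Fin n → ZMod 2)
    (hg0 : g 0 = allOnes n) (hgi : ∀ i : Fin n, i ≠ 0 → g i = fun t => if t = i then 1 else 0) :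
    ∀ m, subprod n n m (Fin m) g = ⊤ := by
  intro m
  induction m with
  | zero =>
    rw [eq_top_iff]
    intro c _
    have hb : bvec g (fun x : Fin 0 => (0 : Fin n)) = fun _ => 1 := by
      funext i; simp [bvec]
    have hmem : (fun _ => (1:ZMod 2)) ∈ subprod n n 0 (Fin 0) g :=
      Submodule.subset_span ⟨fun x => 0, by simp, hb.symm⟩
    have : c = c (fun x => x.elim0) • fun _ => (1:ZMod 2) := by
      funext i
      have : i = fun x => x.elim0 := funext fun x => x.elim0
      rw [this]; simp
    rw [this]
    exact Submodule.smul_mem _ _ hmem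
  | succ m ih =>
    rw [eq_top_iff]
    intro c _
    rw [mem_subprod_succ (by omega) g hg0 hgi]
    refine ⟨fun x => c (Fin.cons 0 x),
      fun t => if t = 0 then 0 else fun x => c (Fin.cons t x) + c (Fin.cons 0 x),
      ?_, ?_, by simp, ?_⟩
    · rw [subprod_eq_of_le (by omega), ih]; trivial
    · intro t
      have : m + 1 - 1 = m := rfl
      rw [this, ih]; trivial
    · funext j
      by_cases hj : j 0 = 0
      · simp only [hj, if_pos rfl]
        rw [← hj, Fin.cons_self_tail]
        simp
      · simp only [if_neg hj, Fin.cons_self_tail]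
        have h2 : ∀ a b : ZMod 2, b = a + (b + a) := by decide
        exact h2 _ _

lemma subprod_rep (g : Fin n → Fin n → ZMod 2)
    (hg0 : g 0 = allOnes n) (m : ℕ) (c : (Fin m → Fin n) → ZMod 2) :
    c ∈ subprod n n 0 (Fin m) g ↔ ∃ a : ZMod 2, c = fun _ => a := by
  have hset : {c : (Fin m → Fin n) → ZMod 2 |
      ∃ j : Fin m → Fin n, (Finset.univ.filter fun ℓ => j ℓ ≠ 0).card ≤ 0 ∧ c = bvec g j}
      = {fun _ => 1} := by
    ext x
    constructor
    · rintro ⟨j, hj, rfl⟩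
      have hj0 : ∀ ℓ, j ℓ = 0 := by
        intro ℓ
        by_contra hℓ
        have : ℓ ∈ Finset.univ.filter fun ℓ => j ℓ ≠ 0 := by simp [hℓ]
        have := Finset.card_pos.mpr ⟨ℓ, this⟩
        omega
      have : bvec g j = fun _ => 1 := by
        funext i; simp [bvec, hj0, hg0, allOnes]
      simp [this]
    · rintro rfl
      exact ⟨fun _ => 0, by simp, by funext i; simp [bvec, hg0, allOnes]⟩
  rw [subprod, hset, Submodule.mem_span_singleton]
  constructor
  · rintro ⟨a, rfl⟩; exact ⟨a, by funext i; simp⟩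
  · rintro ⟨a, rfl⟩; exact ⟨a, by funext i; simp⟩

end Aux

section Main

variable {n : ℕ} [NeZero n]

/-- the cyclic shift permutation applied coordinatewise -/
def sigPerm (n m : ℕ) [NeZero n] : Equiv.Perm (Fin m → Fin n) where
  toFun i := fun ℓ => i ℓ + 1
  invFun i := fun ℓ => i ℓ - 1
  left_inv i := funext fun ℓ => by simp
  right_inv i := funext fun ℓ => by simp

lemma fin_succ_val (hn : 2 ≤ n) (t : Fin n) : ((t + 1 : Fin n) : ℕ) = ((t : ℕ) + 1) % n := by
  rw [Fin.add_def]
  simp [Fin.val_one', Nat.mod_eq_of_lt (show 1 < n by omega)]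

lemma fin_add_one_eq_zero_iff (hn : 2 ≤ n) (t : Fin n) :
    t + 1 = 0 ↔ (t : ℕ) = n - 1 := by
  rw [Fin.ext_iff, fin_succ_val hn]
  have ht := t.isLt
  have h0v : ((0 : Fin n) : ℕ) = 0 := rfl
  rw [h0v]
  rcases Nat.lt_or_ge ((t : ℕ) + 1) n with h | h
  · rw [Nat.mod_eq_of_lt h]; omega
  · have he : (t : ℕ) + 1 = n := by omega
    rw [he, Nat.mod_self]
    omega

lemma fin_val_add_one (hn : 2 ≤ n) (t : Fin n) (h : (t : ℕ) ≠ n - 1) :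
    ((t + 1 : Fin n) : ℕ) = (t : ℕ) + 1 := by
  rw [fin_succ_val hn, Nat.mod_eq_of_lt (by have := t.isLt; omega)]

lemma key (hn : 2 ≤ n)
    (g : Fin n → Fin n → ZMod 2) (hg0 : g 0 = allOnes n)
    (hgi : ∀ i : Fin n, i ≠ 0 → g i = fun t => if t = i then 1 else 0)
    (DB : (r m : ℕ) → Set ((Fin m → Fin n) → ZMod 2))
    (hfull : ∀ m, DB m m = Set.univ)
    (hrep : ∀ m, DB 0 m = {c | ∃ a : ZMod 2, c = fun _ => a})
    (hrec : ∀ m r, 1 ≤ r → r ≤ m →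
      DB r (m + 1) = {c | ∃ d : Fin n → ((Fin m → Fin n) → ZMod 2),
        d 0 ∈ DB r m ∧ (∀ ℓ, ℓ ≠ 0 → d ℓ ∈ DB (r - 1) m) ∧
        c = fun i => if h : (i 0 : ℕ) = n - 1 then d 0 (Fin.tail i)
          else d 0 (Fin.tail i) +
            d ⟨(i 0 : ℕ) + 1, Nat.lt_of_le_of_ne (i 0).isLt (fun e => h (Nat.eq_sub_of_add_eq e))⟩ (Fin.tail i)}) :
    ∀ m, ∀ r ≤ m, ∀ c, c ∈ subprod n n r (Fin m) g ↔ (c ∘ (sigPerm n m)) ∈ DB r m := by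
  intro m
  induction m with
  | zero =>
    intro r hr c
    obtain rfl : r = 0 := by omega
    rw [subprod_full g hg0 hgi 0, hfull 0]
    simp
  | succ m ih =>
    intro r hr c
    rcases eq_or_ne r (m + 1) with rfl | hrm
    · rw [subprod_full g hg0 hgi (m + 1), hfull (m + 1)]
      simp
    rcases Nat.eq_zero_or_pos r with rfl | hr1
    · rw [subprod_rep g hg0, hrep (m + 1)]
      constructor
      · rintro ⟨a, rfl⟩; exact ⟨a, rfl⟩
      · rintro ⟨a, ha⟩
        refine ⟨a, funext fun i => ?_⟩
        have := congrFun ha ((sigPerm n (m + 1)).symm i)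
        simpa [Equiv.apply_symm_apply] using this
    have hr2 : r ≤ m := by omega
    rw [mem_subprod_succ hr1 g hg0 hgi c, hrec m r hr1 hr2]
    constructor
    · rintro ⟨f, h, hf, hh, h0, rfl⟩
      refine ⟨fun ℓ => if ℓ = 0 then f ∘ (sigPerm n m) else h ℓ ∘ (sigPerm n m), ?_, ?_, ?_⟩
      · show (if (0 : Fin n) = 0 then f ∘ (sigPerm n m) else h 0 ∘ (sigPerm n m)) ∈ DB r m
        rw [if_pos rfl]
        exact (ih r hr2 f).mp hf
      · intro ℓ hℓ
        show (if ℓ = 0 then f ∘ (sigPerm n m) else h ℓ ∘ (sigPerm n m)) ∈ DB (r - 1) m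
        rw [if_neg hℓ]
        exact (ih (r - 1) (by omega) (h ℓ)).mp (hh ℓ)
      · funext i
        have htail : (Fin.tail fun ℓ => i ℓ + 1) = (sigPerm n m) (Fin.tail i) := rfl
        by_cases hcase : (i 0 : ℕ) = n - 1
        · rw [dif_pos hcase]
          have h10 : i 0 + 1 = 0 := (fin_add_one_eq_zero_iff hn _).mpr hcase
          show f (Fin.tail fun ℓ => i ℓ + 1) + h (i 0 + 1) (Fin.tail fun ℓ => i ℓ + 1)
            = (if (0 : Fin n) = 0 then f ∘ (sigPerm n m) else h 0 ∘ (sigPerm n m)) (Fin.tail i)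
          rw [h10, h0, htail, if_pos rfl]
          simp
        · rw [dif_neg hcase]
          have hne : i 0 + 1 ≠ 0 := fun hq => hcase ((fin_add_one_eq_zero_iff hn _).mp hq)
          have hidx : (⟨(i 0 : ℕ) + 1, by have := (i 0).isLt; omega⟩ : Fin n) = i 0 + 1 :=
            Fin.ext (fin_val_add_one hn _ hcase).symm
          show f (Fin.tail fun ℓ => i ℓ + 1) + h (i 0 + 1) (Fin.tail fun ℓ => i ℓ + 1)
            = (if (0 : Fin n) = 0 then f ∘ (sigPerm n m) else h 0 ∘ (sigPerm n m)) (Fin.tail i)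
              + (if (⟨(i 0 : ℕ) + 1, by have := (i 0).isLt; omega⟩ : Fin n) = 0
                  then f ∘ (sigPerm n m)
                  else h ⟨(i 0 : ℕ) + 1, by have := (i 0).isLt; omega⟩ ∘ (sigPerm n m))
                (Fin.tail i)
          rw [hidx, if_pos rfl, if_neg hne, htail]
          rfl
    · rintro ⟨d, hd0, hdl, hc⟩
      refine ⟨d 0 ∘ (sigPerm n m).symm,
        fun t => if t = 0 then 0 else d t ∘ (sigPerm n m).symm, ?_, ?_, by simp, ?_⟩
      · refine (ih r hr2 _).mpr ?_
        have : (d 0 ∘ (sigPerm n m).symm) ∘ (sigPerm n m) = d 0 := by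
          funext x; simp [Equiv.symm_apply_apply]
        rw [this]; exact hd0
      · intro t
        show (if t = 0 then 0 else d t ∘ (sigPerm n m).symm) ∈ subprod n n (r - 1) (Fin m) g
        rcases eq_or_ne t 0 with rfl | ht
        · rw [if_pos rfl]; exact zero_mem _
        · rw [if_neg ht]
          refine (ih (r - 1) (by omega) _).mpr ?_
          have : (d t ∘ (sigPerm n m).symm) ∘ (sigPerm n m) = d t := by
            funext x; simp [Equiv.symm_apply_apply]
          rw [this]; exact hdl t ht
      · funext j
        have hj := congrFun hc ((sigPerm n (m + 1)).symm j)
        have hσ : (sigPerm n (m + 1)) ((sigPerm n (m + 1)).symm j) = j :=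
          Equiv.apply_symm_apply _ _
        rw [Function.comp_apply, hσ] at hj
        rw [hj]
        have hi0 : ((sigPerm n (m + 1)).symm j) 0 = j 0 - 1 := rfl
        have hadd : j 0 - 1 + 1 = j 0 := by abel
        have htail : Fin.tail ((sigPerm n (m + 1)).symm j) = (sigPerm n m).symm (Fin.tail j) :=
          rfl
        show _ = (d 0 ∘ (sigPerm n m).symm) (Fin.tail j)
          + (if j 0 = 0 then 0 else d (j 0) ∘ (sigPerm n m).symm) (Fin.tail j)
        by_cases hj0 : j 0 = 0
        · have hcase : ((((sigPerm n (m + 1)).symm j) 0 : Fin n) : ℕ) = n - 1 := by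
            rw [hi0]
            exact (fin_add_one_eq_zero_iff hn _).mp (by rw [hadd]; exact hj0)
          rw [dif_pos hcase, htail, if_pos hj0]
          simp
        · have hcase : ((((sigPerm n (m + 1)).symm j) 0 : Fin n) : ℕ) ≠ n - 1 := by
            rw [hi0]
            intro hq
            exact hj0 (by rw [← hadd]; exact (fin_add_one_eq_zero_iff hn _).mpr hq)
          rw [dif_neg hcase, htail]
          have hval : ((((sigPerm n (m + 1)).symm j) 0 : Fin n) : ℕ) + 1 = ((j 0 : Fin n) : ℕ) := by
            conv_rhs => rw [← hadd, ← hi0]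
            exact (fin_val_add_one hn _ hcase).symm
          have hidx : (⟨((((sigPerm n (m + 1)).symm j) 0 : Fin n) : ℕ) + 1,
              by have := (((sigPerm n (m + 1)).symm j) 0).isLt; omega⟩ : Fin n) = j 0 :=
            Fin.ext hval
          rw [hidx, if_neg hj0]
          rfl

end Main

theorem stmt12 (n : ℕ) [NeZero n] (hn : 2 ≤ n)
    (g : Fin n → Fin n → ZMod 2) (hg0 : g 0 = allOnes n)
    (hgi : ∀ i : Fin n, i ≠ 0 → g i = fun t => if t = i then 1 else 0)
    (DB : (r m : ℕ) → Set ((Fin m → Fin n) → ZMod 2))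
    (hfull : ∀ m, DB m m = Set.univ)
    (hrep : ∀ m, DB 0 m = {c | ∃ a : ZMod 2, c = fun _ => a})
    (hrec : ∀ m r, 1 ≤ r → r ≤ m →
      DB r (m + 1) = {c | ∃ d : Fin n → ((Fin m → Fin n) → ZMod 2),
        d 0 ∈ DB r m ∧ (∀ ℓ, ℓ ≠ 0 → d ℓ ∈ DB (r - 1) m) ∧
        c = fun i => if h : (i 0 : ℕ) = n - 1 then d 0 (Fin.tail i)
          else d 0 (Fin.tail i) +
            d ⟨(i 0 : ℕ) + 1, by have := (i 0).isLt; omega⟩ (Fin.tail i)})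
    (m r : ℕ) (hr : r ≤ m) :
    ∃ σ : Equiv.Perm (Fin m → Fin n),
      ∀ c, c ∈ subprod n n r (Fin m) g ↔ (c ∘ σ) ∈ DB r m := by
  exact ⟨sigPerm n m, key hn g hg0 hgi DB hfull hrep hrec m r hr⟩
end

section
/- When C = 𝔽_2^2 with g_0 = (1,1) and g_1 = (0,1), the code C^{⊗[r,m]} equals {d ⊗ (1,1) + d' ⊗ (0,1) : d ∈ C^{⊗[r,m-1]}, d' ∈ C^{⊗[r-1,m-1]}}, which coincides (up to a coordinate permutation) with the Plotkin construction RM(r,m) = {(u | u+v) : u ∈ RM(r,m-1), v ∈ RM(r-1,m-1)} of the Reed–Muller code. -/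
namespace Stmt13Aux

lemma bvec_snoc {m : ℕ} (g : Fin 2 → Fin 2 → ZMod 2) (j : Fin m → Fin 2) (t : Fin 2) :
    bvec g (Fin.snoc j t) = tens2 (bvec g j) (g t) := by
  funext i
  simp only [bvec, tens2, Fin.prod_univ_castSucc, Fin.snoc_castSucc, Fin.snoc_last]
  rfl

lemma wt_snoc {m : ℕ} (j : Fin m → Fin 2) (t : Fin 2) :
    (Finset.univ.filter fun ℓ => (Fin.snoc j t : Fin (m + 1) → Fin 2) ℓ ≠ 0).card =
      (Finset.univ.filter fun ℓ => j ℓ ≠ 0).card + (if t ≠ 0 then 1 else 0) := by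
  simp only [Finset.card_filter]
  rw [Fin.sum_univ_castSucc]
  simp

def tensL {m : ℕ} (a : Fin 2 → ZMod 2) :
    ((Fin m → Fin 2) → ZMod 2) →ₗ[ZMod 2] ((Fin (m + 1) → Fin 2) → ZMod 2) where
  toFun d := tens2 d a
  map_add' d e := by funext i; simp [tens2, add_mul]
  map_smul' s d := by funext i; simp [tens2, mul_assoc]

def Tpair {m : ℕ} (a b : Fin 2 → ZMod 2) :
    (((Fin m → Fin 2) → ZMod 2) × ((Fin m → Fin 2) → ZMod 2)) →ₗ[ZMod 2]
      ((Fin (m + 1) → Fin 2) → ZMod 2) :=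
  (tensL a).comp (LinearMap.fst _ _ _) + (tensL b).comp (LinearMap.snd _ _ _)

lemma Tpair_apply {m : ℕ} (a b : Fin 2 → ZMod 2) (d d' : (Fin m → Fin 2) → ZMod 2) :
    Tpair a b (d, d') = tens2 d a + tens2 d' b := rfl

lemma fin2_ne (t : Fin 2) (h : t ≠ 0) : t = 1 := by
  revert t; decide

lemma tensL_mem {m : ℕ} (g : Fin 2 → Fin 2 → ZMod 2) {s r : ℕ} (t : Fin 2)
    (h : s + (if t ≠ 0 then 1 else 0) ≤ r)
    {d : (Fin m → Fin 2) → ZMod 2} (hd : d ∈ subprod 2 2 s (Fin m) g) :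
    tens2 d (g t) ∈ subprod 2 2 r (Fin (m + 1)) g := by
  have hle : subprod 2 2 s (Fin m) g ≤
      (subprod 2 2 r (Fin (m + 1)) g).comap (tensL (g t)) := by
    apply Submodule.span_le.mpr
    rintro c ⟨j, hj, rfl⟩
    refine Submodule.subset_span ⟨Fin.snoc j t, ?_, ?_⟩
    · rw [wt_snoc]
      split_ifs at h ⊢ <;> omega
    · exact (bvec_snoc g j t).symm
  exact hle hd

lemma part1sub {m : ℕ} (g : Fin 2 → Fin 2 → ZMod 2) (r : ℕ) (hr1 : 1 ≤ r) :
    subprod 2 2 r (Fin (m + 1)) g =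
      Submodule.map (Tpair (g 0) (g 1))
        ((subprod 2 2 r (Fin m) g).prod (subprod 2 2 (r - 1) (Fin m) g)) := by
  apply le_antisymm
  · apply Submodule.span_le.mpr
    rintro c ⟨j, hj, rfl⟩
    have hsnoc := Fin.snoc_init_self j
    have hwt := wt_snoc (Fin.init j) (j (Fin.last m))
    rw [hsnoc] at hwt
    have key : bvec g j = tens2 (bvec g (Fin.init j)) (g (j (Fin.last m))) := by
      conv_lhs => rw [← hsnoc]
      rw [bvec_snoc]
    by_cases ht : j (Fin.last m) = 0
    · rw [if_neg (by simp [ht] : ¬ (j (Fin.last m) ≠ 0))] at hwt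
      refine ⟨(bvec g (Fin.init j), 0), Submodule.mem_prod.mpr ⟨?_, Submodule.zero_mem _⟩, ?_⟩
      · refine Submodule.subset_span ⟨Fin.init j, ?_, rfl⟩
        omega
      · rw [Tpair_apply, key, ht]
        funext i; simp [tens2]
    · rw [if_pos ht] at hwt
      have ht1 : j (Fin.last m) = 1 := fin2_ne _ ht
      refine ⟨(0, bvec g (Fin.init j)), Submodule.mem_prod.mpr ⟨Submodule.zero_mem _, ?_⟩, ?_⟩
      · refine Submodule.subset_span ⟨Fin.init j, ?_, rfl⟩
        omega
      · rw [Tpair_apply, key, ht1]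
        funext i; simp [tens2]
  · rintro c ⟨⟨d, d'⟩, hp, rfl⟩
    simp only [SetLike.mem_coe, Submodule.mem_prod] at hp
    rw [Tpair_apply]
    refine Submodule.add_mem _ ?_ ?_
    · exact tensL_mem g 0 (by simp) hp.1
    · exact tensL_mem g 1 (by simp; omega) hp.2

lemma part1set {m : ℕ} (g : Fin 2 → Fin 2 → ZMod 2) (r : ℕ) (hr1 : 1 ≤ r) :
    ((subprod 2 2 r (Fin (m + 1)) g : Set ((Fin (m + 1) → Fin 2) → ZMod 2)) =
      {c | ∃ d ∈ subprod 2 2 r (Fin m) g, ∃ d' ∈ subprod 2 2 (r - 1) (Fin m) g,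
        c = tens2 d (g 0) + tens2 d' (g 1)}) := by
  rw [part1sub g r hr1]
  ext c
  simp only [SetLike.mem_coe, Submodule.mem_map, Submodule.mem_prod, Set.mem_setOf_eq]
  constructor
  · rintro ⟨⟨d, d'⟩, ⟨hd, hd'⟩, rfl⟩
    exact ⟨d, hd, d', hd', (Tpair_apply _ _ _ _).symm⟩
  · rintro ⟨d, hd, d', hd', rfl⟩
    exact ⟨(d, d'), ⟨hd, hd'⟩, Tpair_apply _ _ _ _⟩

lemma subprod_zero (g : Fin 2 → Fin 2 → ZMod 2) (hg0 : g 0 = allOnes 2)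
    {ι : Type} [Fintype ι] [DecidableEq ι] (c : (ι → Fin 2) → ZMod 2) :
    c ∈ subprod 2 2 0 ι g ↔ ∃ a : ZMod 2, c = fun _ => a := by
  have hset : {c : (ι → Fin 2) → ZMod 2 |
      ∃ j : ι → Fin 2, (Finset.univ.filter fun ℓ => j ℓ ≠ 0).card ≤ 0 ∧ c = bvec g j} =
      {fun _ => 1} := by
    ext x
    constructor
    · rintro ⟨j, hj, rfl⟩
      have hj0 : ∀ ℓ, j ℓ = 0 := by
        intro ℓ
        by_contra h
        have hmem : ℓ ∈ Finset.univ.filter fun ℓ => j ℓ ≠ 0 := by simp [h]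
        have := Finset.card_pos.mpr ⟨ℓ, hmem⟩
        omega
      have : bvec g j = fun _ => 1 := by
        funext i; simp [bvec, hj0, hg0, allOnes]
      simp [this]
    · rintro rfl
      refine ⟨fun _ => 0, by simp, ?_⟩
      funext i; simp [bvec, hg0, allOnes]
  rw [subprod, hset, Submodule.mem_span_singleton]
  constructor
  · rintro ⟨a, rfl⟩
    exact ⟨a, by funext i; simp⟩
  · rintro ⟨a, rfl⟩
    exact ⟨a, by funext i; simp⟩

lemma subprod_mono (g : Fin 2 → Fin 2 → ZMod 2) {ι : Type} [Fintype ι] [DecidableEq ι]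
    {r r' : ℕ} (h : r ≤ r') : subprod 2 2 r ι g ≤ subprod 2 2 r' ι g :=
  Submodule.span_mono fun c ⟨j, hj, hc⟩ => ⟨j, hj.trans h, hc⟩

lemma add_key : ∀ a b : ZMod 2, a + (a + b) = b := by decide

lemma subprod_top (g : Fin 2 → Fin 2 → ZMod 2) (hg0 : g 0 = allOnes 2)
    (hg1 : g 1 = fun t => if t = 0 then 0 else 1) :
    ∀ m, subprod 2 2 m (Fin m) g = ⊤ := by
  intro m
  induction m with
  | zero =>
    rw [eq_top_iff]
    intro c _
    have h1 : bvec g (fun _ : Fin 0 => (0 : Fin 2)) = fun _ => 1 := by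
      funext i; simp [bvec]
    have hc : c = c (fun x => x.elim0) • bvec g (fun _ => 0) := by
      funext i
      have hi : i = fun x => x.elim0 := funext fun x => x.elim0
      subst hi
      simp [h1]
    rw [hc]
    exact Submodule.smul_mem _ _ (Submodule.subset_span ⟨_, by simp, rfl⟩)
  | succ m ih =>
    rw [eq_top_iff]
    intro c _
    have htop1 : subprod 2 2 (m + 1) (Fin m) g = ⊤ :=
      top_unique (ih ▸ subprod_mono g (Nat.le_succ m))
    rw [part1sub g (m + 1) (by omega)]
    refine ⟨(fun i' => c (Fin.snoc i' 0),
             fun i' => c (Fin.snoc i' 0) + c (Fin.snoc i' 1)),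
            Submodule.mem_prod.mpr ⟨by rw [htop1]; trivial, by
              show _ ∈ subprod 2 2 (m + 1 - 1) (Fin m) g
              rw [show m + 1 - 1 = m from rfl, ih]; trivial⟩, ?_⟩
    rw [Tpair_apply]
    funext i
    have hi : Fin.snoc (Fin.init i) (i (Fin.last m)) = i := Fin.snoc_init_self i
    have e1 : g 0 (i (Fin.last m)) = 1 := by rw [hg0]; rfl
    have e2 : g 1 (i (Fin.last m)) = (if i (Fin.last m) = 0 then 0 else 1) := by rw [hg1]
    show c (Fin.snoc (Fin.init i) 0) * g 0 (i (Fin.last m)) +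
      (c (Fin.snoc (Fin.init i) 0) + c (Fin.snoc (Fin.init i) 1)) * g 1 (i (Fin.last m)) = c i
    rw [e1, e2, mul_one]
    by_cases h0 : i (Fin.last m) = 0
    · rw [if_pos h0, mul_zero, add_zero,
        show (0 : Fin 2) = i (Fin.last m) from h0.symm, hi]
    · rw [if_neg h0, mul_one, add_key,
        show (1 : Fin 2) = i (Fin.last m) from (fin2_ne _ h0).symm, hi]

def revArr (m : ℕ) : (Fin m → Fin 2) ≃ (Fin m → Fin 2) where
  toFun i := i ∘ Fin.rev
  invFun i := i ∘ Fin.rev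
  left_inv i := by funext ℓ; simp [Function.comp, Fin.rev_rev]
  right_inv i := by funext ℓ; simp [Function.comp, Fin.rev_rev]

lemma revArr_apply {m : ℕ} (i : Fin m → Fin 2) : revArr m i = i ∘ Fin.rev := rfl

lemma revArr_revArr {m : ℕ} (i : Fin m → Fin 2) : revArr m (revArr m i) = i := by
  funext ℓ; simp [revArr, Function.comp, Fin.rev_rev]

lemma init_comp_rev {m : ℕ} (i : Fin (m + 1) → Fin 2) :
    Fin.init (i ∘ Fin.rev) = Fin.tail i ∘ Fin.rev := by
  funext ℓ
  show i ((Fin.castSucc ℓ).rev) = i (ℓ.rev.succ)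
  rw [Fin.rev_castSucc]

lemma tail_comp_rev {m : ℕ} (i : Fin (m + 1) → Fin 2) :
    Fin.tail (i ∘ Fin.rev) = Fin.init i ∘ Fin.rev := by
  funext ℓ
  show i ((ℓ.succ).rev) = i (ℓ.rev.castSucc)
  rw [Fin.rev_succ]

lemma main_zero (g : Fin 2 → Fin 2 → ZMod 2) (hg0 : g 0 = allOnes 2)
    (RM : (r m : ℕ) → Set ((Fin m → Fin 2) → ZMod 2))
    (hrep : ∀ m, RM 0 m = {c | ∃ a : ZMod 2, c = fun _ => a})
    (m : ℕ) (c : (Fin m → Fin 2) → ZMod 2) :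
    c ∈ subprod 2 2 0 (Fin m) g ↔ (c ∘ (revArr m)) ∈ RM 0 m := by
  rw [hrep, subprod_zero g hg0]
  constructor
  · rintro ⟨a, rfl⟩
    exact ⟨a, rfl⟩
  · rintro ⟨a, ha⟩
    refine ⟨a, funext fun i => ?_⟩
    have h := congrFun ha (revArr m i)
    simpa [Function.comp, revArr_revArr] using h

lemma main (g : Fin 2 → Fin 2 → ZMod 2) (hg0 : g 0 = allOnes 2)
    (hg1 : g 1 = fun t => if t = 0 then 0 else 1)
    (RM : (r m : ℕ) → Set ((Fin m → Fin 2) → ZMod 2))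
    (hfull : ∀ m, RM m m = Set.univ)
    (hrep : ∀ m, RM 0 m = {c | ∃ a : ZMod 2, c = fun _ => a})
    (hrec : ∀ m r, 1 ≤ r → r ≤ m →
      RM r (m + 1) = {c | ∃ u ∈ RM r m, ∃ v ∈ RM (r - 1) m,
        c = fun i => if i 0 = 0 then u (Fin.tail i)
          else u (Fin.tail i) + v (Fin.tail i)}) :
    ∀ m r, r ≤ m → ∀ c, c ∈ subprod 2 2 r (Fin m) g ↔ (c ∘ (revArr m)) ∈ RM r m := by
  intro m
  induction m with
  | zero =>
    intro r hr c
    obtain rfl : r = 0 := Nat.le_zero.mp hr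
    exact main_zero g hg0 RM hrep 0 c
  | succ m ih =>
    intro r hr c
    rcases Nat.eq_zero_or_pos r with rfl | hr1
    · exact main_zero g hg0 RM hrep (m + 1) c
    by_cases hrm : r ≤ m
    · rw [hrec m r hr1 hrm]
      constructor
      · intro hc
        rw [part1sub g r hr1] at hc
        obtain ⟨⟨d, d'⟩, hp, rfl⟩ := hc
        simp only [SetLike.mem_coe, Submodule.mem_prod] at hp
        refine ⟨d ∘ revArr m, (ih r hrm d).mp hp.1,
                d' ∘ revArr m, (ih (r - 1) (by omega) d').mp hp.2, ?_⟩
        funext i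
        show tens2 d (g 0) (i ∘ Fin.rev) + tens2 d' (g 1) (i ∘ Fin.rev) = _
        simp only [tens2, init_comp_rev]
        have hlast : (i ∘ Fin.rev) (Fin.last m) = i 0 := by
          show i ((Fin.last m).rev) = i 0
          rw [Fin.rev_last]
        rw [hlast, hg0, hg1]
        simp only [allOnes, mul_one]
        show d (Fin.tail i ∘ Fin.rev) + d' (Fin.tail i ∘ Fin.rev) * _ =
          if i 0 = 0 then (d ∘ revArr m) (Fin.tail i) else
            (d ∘ revArr m) (Fin.tail i) + (d' ∘ revArr m) (Fin.tail i)
        split_ifs with h <;> simp [revArr_apply, Function.comp]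
      · intro hc
        obtain ⟨u, hu, v, hv, hceq⟩ := hc
        rw [part1sub g r hr1]
        have hxu : (u ∘ revArr m) ∘ revArr m = u := by
          funext ℓ; simp [Function.comp, revArr_revArr]
        have hxv : (v ∘ revArr m) ∘ revArr m = v := by
          funext ℓ; simp [Function.comp, revArr_revArr]
        refine ⟨(u ∘ revArr m, v ∘ revArr m),
          Submodule.mem_prod.mpr ⟨(ih r hrm _).mpr (by rw [hxu]; exact hu),
            (ih (r - 1) (by omega) _).mpr (by rw [hxv]; exact hv)⟩, ?_⟩
        rw [Tpair_apply]
        funext i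
        have hci := congrFun hceq (revArr (m + 1) i)
        have hcc : (c ∘ (revArr (m + 1))) (revArr (m + 1) i) = c i := by
          simp [Function.comp, revArr_revArr]
        rw [hcc] at hci
        have h0 : (revArr (m + 1) i) 0 = i (Fin.last m) := by
          show i ((0 : Fin (m + 1)).rev) = i (Fin.last m)
          rw [Fin.rev_zero]
        have htl : Fin.tail (revArr (m + 1) i) = Fin.init i ∘ Fin.rev :=
          tail_comp_rev i
        rw [h0, htl] at hci
        show tens2 _ (g 0) i + tens2 _ (g 1) i = c i
        simp only [tens2, hg0, hg1, allOnes, mul_one]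
        rw [hci]
        show (u ∘ revArr m) (Fin.init i) + (v ∘ revArr m) (Fin.init i) * _ = _
        split_ifs with h <;> simp [revArr_apply, Function.comp]
    · have hreq : r = m + 1 := by omega
      subst hreq
      rw [hfull, subprod_top g hg0 hg1 (m + 1)]
      simp

end Stmt13Aux


theorem stmt13 (g : Fin 2 → Fin 2 → ZMod 2)
    (hg0 : g 0 = allOnes 2)
    (hg1 : g 1 = fun t => if t = 0 then 0 else 1)
    (RM : (r m : ℕ) → Set ((Fin m → Fin 2) → ZMod 2))
    (hfull : ∀ m, RM m m = Set.univ)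
    (hrep : ∀ m, RM 0 m = {c | ∃ a : ZMod 2, c = fun _ => a})
    (hrec : ∀ m r, 1 ≤ r → r ≤ m →
      RM r (m + 1) = {c | ∃ u ∈ RM r m, ∃ v ∈ RM (r - 1) m,
        c = fun i => if i 0 = 0 then u (Fin.tail i)
          else u (Fin.tail i) + v (Fin.tail i)})
    (m r : ℕ) (hr1 : 1 ≤ r) (hr : r ≤ m) :
    ((subprod 2 2 r (Fin (m + 1)) g : Set ((Fin (m + 1) → Fin 2) → ZMod 2)) =
      {c | ∃ d ∈ subprod 2 2 r (Fin m) g, ∃ d' ∈ subprod 2 2 (r - 1) (Fin m) g,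
        c = tens2 d (g 0) + tens2 d' (g 1)}) ∧
    (∃ σ : Equiv.Perm (Fin (m + 1) → Fin 2),
      ∀ c, c ∈ subprod 2 2 r (Fin (m + 1)) g ↔ (c ∘ σ) ∈ RM r (m + 1)) := by
  constructor
  · exact Stmt13Aux.part1set g r hr1
  · exact ⟨Stmt13Aux.revArr (m + 1),
      fun c => Stmt13Aux.main g hg0 hg1 RM hfull hrep hrec (m + 1) r (by omega) c⟩
end

section
/- The first-order code satisfies C^{⊗[1,m]} = { d ⊗ 𝟙_n + 𝟙_{n^{m-1}} ⊗ a : d ∈ C^{⊗[1,m-1]}, a ∈ C_sub } for m ≥ 2. -/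
theorem stmt14 (n k : ℕ) [NeZero k] (hk : 2 ≤ k)
    (C Csub : Submodule (ZMod 2) (Fin n → ZMod 2))
    (hC1 : allOnes n ∈ C) (hCk : Module.finrank (ZMod 2) C = k)
    (hsub : Csub ≤ C) (hsubdim : Module.finrank (ZMod 2) Csub = k - 1)
    (hsub1 : allOnes n ∉ Csub)
    (g : Fin k → Fin n → ZMod 2) (hg0 : g 0 = allOnes n)
    (hgsub : ∀ i, i ≠ 0 → g i ∈ Csub)
    (hgind : LinearIndependent (ZMod 2) (fun i : {i : Fin k // i ≠ 0} => g i.1))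
    (m : ℕ) (hm : 1 ≤ m) :
    (subprod n k 1 (Fin (m + 1)) g : Set ((Fin (m + 1) → Fin n) → ZMod 2)) =
      {c | ∃ d ∈ subprod n k 1 (Fin m) g, ∃ a ∈ Csub,
        c = fun i => d (Fin.init i) + a (i (Fin.last m))} := by
  classical
  set L1 : ((Fin m → Fin n) → ZMod 2) →ₗ[ZMod 2] ((Fin (m+1) → Fin n) → ZMod 2) :=
    { toFun := fun d i => d (Fin.init i)
      map_add' := fun _ _ => rfl
      map_smul' := fun _ _ => rfl } with hL1
  set L2 : ((Fin n) → ZMod 2) →ₗ[ZMod 2] ((Fin (m+1) → Fin n) → ZMod 2) :=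
    { toFun := fun a i => a (i (Fin.last m))
      map_add' := fun _ _ => rfl
      map_smul' := fun _ _ => rfl } with hL2
  -- Csub is spanned by the g i, i ≠ 0
  have hCsub_span : Csub
      = Submodule.span (ZMod 2) (Set.range fun i : {i : Fin k // i ≠ 0} => g i.1) := by
    refine (Submodule.eq_of_le_of_finrank_le ?_ ?_).symm
    · rw [Submodule.span_le]
      rintro _ ⟨i, rfl⟩
      exact hgsub i.1 i.2
    · rw [hsubdim, finrank_span_eq_card hgind]
      have : Fintype.card {i : Fin k // i ≠ 0} = k - 1 := by
        simp [Fintype.card_subtype_compl, Fintype.card_subtype_eq]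
      omega
  -- L1 of a generator is a generator
  have hL1gen : ∀ j : Fin m → Fin k,
      (Finset.univ.filter fun ℓ => j ℓ ≠ 0).card ≤ 1 →
      L1 (bvec g j) ∈ subprod n k 1 (Fin (m+1)) g := by
    intro j hj
    apply Submodule.subset_span
    refine ⟨Fin.snoc j 0, ?_, ?_⟩
    · rw [Finset.card_le_one]
      intro a ha b hb
      simp only [Finset.mem_filter, Finset.mem_univ, true_and] at ha hb
      induction a using Fin.lastCases with
      | last => simp [Fin.snoc_last] at ha
      | cast a =>
        induction b using Fin.lastCases with
        | last => simp [Fin.snoc_last] at hb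
        | cast b =>
          rw [Fin.snoc_castSucc] at ha hb
          have := Finset.card_le_one.mp hj a (by simp [ha]) b (by simp [hb])
          rw [this]
    · funext i
      show bvec g j (Fin.init i) = _
      unfold bvec
      rw [Fin.prod_univ_castSucc]
      simp [Fin.snoc_last, Fin.snoc_castSucc, hg0, allOnes, Fin.init]
  -- L2 (g t) is a generator
  have hL2gen : ∀ t : Fin k, L2 (g t) ∈ subprod n k 1 (Fin (m+1)) g := by
    intro t
    apply Submodule.subset_span
    refine ⟨fun ℓ => if ℓ = Fin.last m then t else 0, ?_, ?_⟩
    · calc (Finset.univ.filter fun ℓ => (if ℓ = Fin.last m then t else 0) ≠ 0).card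
          ≤ ({Fin.last m} : Finset (Fin (m+1))).card := by
            apply Finset.card_le_card
            intro ℓ hℓ
            simp only [Finset.mem_filter, Finset.mem_univ, true_and] at hℓ
            simp only [Finset.mem_singleton]
            by_contra h
            simp [h] at hℓ
        _ = 1 := Finset.card_singleton _
    · funext i
      show g t (i (Fin.last m)) = _
      unfold bvec
      rw [Finset.prod_eq_single (Fin.last m)]
      · simp
      · intro ℓ _ hℓ
        simp [hℓ, hg0, allOnes]
      · simp
  have key : subprod n k 1 (Fin (m+1)) g
      = (subprod n k 1 (Fin m) g).map L1 ⊔ Csub.map L2 := by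
    apply le_antisymm
    · rw [subprod, Submodule.span_le]
      rintro _ ⟨j, hj, rfl⟩
      by_cases hlast : j (Fin.last m) = 0
      · -- b_j = L1 (bvec g (init j))
        apply Submodule.mem_sup_left
        refine ⟨bvec g (Fin.init j), ?_, ?_⟩
        · apply Submodule.subset_span
          refine ⟨Fin.init j, ?_, rfl⟩
          refine le_trans (Finset.card_le_card_of_injOn Fin.castSucc ?_ ?_) hj
          · intro a ha
            simp only [Finset.mem_coe, Finset.mem_filter, Finset.mem_univ, true_and] at ha ⊢
            exact ha
          · exact fun a _ b _ h => Fin.castSucc_injective m h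
        · funext i
          show bvec g (Fin.init j) (Fin.init i) = bvec g j i
          unfold bvec
          rw [Fin.prod_univ_castSucc (f := fun ℓ => g (j ℓ) (i ℓ))]
          simp [Fin.init, hlast, hg0, allOnes]
      · -- all other coords are 0
        have hz : ∀ ℓ, ℓ ≠ Fin.last m → j ℓ = 0 := by
          intro ℓ hℓ
          by_contra h
          exact hℓ (Finset.card_le_one.mp hj ℓ (by simp [h]) (Fin.last m) (by simp [hlast]))
        apply Submodule.mem_sup_right
        refine ⟨g (j (Fin.last m)), hgsub _ hlast, ?_⟩
        funext i
        show g (j (Fin.last m)) (i (Fin.last m)) = bvec g j i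
        unfold bvec
        rw [Finset.prod_eq_single (Fin.last m)]
        · intro ℓ _ hℓ
          simp [hz ℓ hℓ, hg0, allOnes]
        · simp
    · apply sup_le
      · rw [Submodule.map_le_iff_le_comap, subprod, Submodule.span_le]
        rintro _ ⟨j, hj, rfl⟩
        exact hL1gen j hj
      · rw [hCsub_span, Submodule.map_le_iff_le_comap, Submodule.span_le]
        rintro _ ⟨t, rfl⟩
        exact hL2gen t.1
  rw [key]
  ext c
  simp only [SetLike.mem_coe, Submodule.mem_sup, Submodule.mem_map, Set.mem_setOf_eq]
  constructor
  · rintro ⟨y, ⟨d, hd, rfl⟩, z, ⟨a, ha, rfl⟩, rfl⟩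
    exact ⟨d, hd, a, ha, rfl⟩
  · rintro ⟨d, hd, a, ha, rfl⟩
    exact ⟨L1 d, ⟨d, hd, rfl⟩, L2 a, ⟨a, ha, rfl⟩, rfl⟩
end

section
/- Lower bound on codeword weight: let c ∈ C^{⊗[r,m]} be written (via the Plotkin-like decomposition) as c = ∑_{i=0}^{k-1} d_i ⊗ g_i with d_0 ∈ C^{⊗[r,m-1]} and d_i ∈ C^{⊗[r-1,m-1]} for i ≥ 1. Let S = ∪_{i=1}^{k-1} supp(d_i). Then wt(c) ≥ |supp(d_0) \ S| · n + |S| · d, where d = dmin(C). -/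
theorem stmt15 (n k : ℕ) [NeZero k] (hk : 2 ≤ k)
    (C Csub : Submodule (ZMod 2) (Fin n → ZMod 2))
    (hC1 : allOnes n ∈ C) (hCk : Module.finrank (ZMod 2) C = k)
    (hsub : Csub ≤ C) (hsubdim : Module.finrank (ZMod 2) Csub = k - 1)
    (hsub1 : allOnes n ∉ Csub)
    (g : Fin k → Fin n → ZMod 2) (hg0 : g 0 = allOnes n)
    (hgsub : ∀ i, i ≠ 0 → g i ∈ Csub)
    (hgind : LinearIndependent (ZMod 2) (fun i : {i : Fin k // i ≠ 0} => g i.1))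
    (dC : ℕ)
    (hdle : ∀ x ∈ C, x ≠ 0 → dC ≤ hammingNorm x)
    (hdex : ∃ x ∈ C, x ≠ 0 ∧ hammingNorm x = dC)
    (m r : ℕ) (hr1 : 1 ≤ r) (hr : r ≤ m)
    (d : Fin k → ((Fin m → Fin n) → ZMod 2))
    (hd0 : d 0 ∈ subprod n k r (Fin m) g)
    (hdi : ∀ i, i ≠ 0 → d i ∈ subprod n k (r - 1) (Fin m) g)
    (c : (Fin (m + 1) → Fin n) → ZMod 2)
    (hc : c = ∑ i, tens2 (d i) (g i)) :
    ((Finset.univ.filter fun t : Fin m → Fin n => d 0 t ≠ 0) \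
          (Finset.univ.filter fun t : Fin m → Fin n => ∃ i, i ≠ 0 ∧ d i t ≠ 0)).card * n +
        (Finset.univ.filter fun t : Fin m → Fin n => ∃ i, i ≠ 0 ∧ d i t ≠ 0).card * dC ≤
      hammingNorm c := by
  classical
  set block : (Fin m → Fin n) → (Fin n → ZMod 2) := fun t => ∑ i, d i t • g i with hblock
  have hcb : ∀ t s, c (Fin.snoc t s) = block t s := by
    intro t s
    simp only [hc, hblock, Finset.sum_apply, tens2, Fin.init_snoc, Fin.snoc_last,
      Pi.smul_apply, smul_eq_mul]
  -- step 1: hammingNorm c = ∑ t, hammingNorm (block t)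
  have hbij : Function.Bijective
      (fun p : (Fin m → Fin n) × Fin n => (Fin.snoc p.1 p.2 : Fin (m + 1) → Fin n)) :=
    Function.bijective_iff_has_inverse.mpr
      ⟨fun i => (Fin.init i, i (Fin.last m)), fun p => by simp, fun i => by simp⟩
  have key : hammingNorm c = ∑ t, hammingNorm (block t) := by
    have h1 : hammingNorm c = ∑ i : Fin (m + 1) → Fin n, if c i ≠ 0 then 1 else 0 := by
      rw [hammingNorm, Finset.card_filter]
    have h2 : ∑ p : (Fin m → Fin n) × Fin n, (if block p.1 p.2 ≠ 0 then 1 else 0)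
        = ∑ i : Fin (m + 1) → Fin n, if c i ≠ 0 then 1 else 0 := by
      refine Fintype.sum_bijective _ hbij _ _ fun p => ?_
      rw [hcb p.1 p.2]
    rw [h1, ← h2, Fintype.sum_prod_type]
    refine Finset.sum_congr rfl fun t _ => ?_
    rw [hammingNorm, Finset.card_filter]
  rw [key]
  set S : Finset (Fin m → Fin n) :=
    Finset.univ.filter fun t : Fin m → Fin n => ∃ i, i ≠ 0 ∧ d i t ≠ 0 with hS
  set A : Finset (Fin m → Fin n) :=
    Finset.univ.filter fun t : Fin m → Fin n => d 0 t ≠ 0 with hA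
  have hone : ∀ x : ZMod 2, x ≠ 0 → x = 1 := by decide
  have hpt : ∀ x y : ZMod 2, x + y = 0 → x = y := by decide
  -- splitting the block sum
  have hsplit : ∀ t, block t = d 0 t • g 0 + ∑ i : {i : Fin k // i ≠ 0}, d i.1 t • g i.1 := by
    intro t
    have herase : ∑ i ∈ Finset.univ.erase (0 : Fin k), d i t • g i
        = ∑ i : {i : Fin k // i ≠ 0}, d i.1 t • g i.1 := by
      rw [← Finset.sum_subtype (Finset.univ.erase (0 : Fin k))
        (fun i => by simp) (fun i => d i t • g i)]
    show (∑ i : Fin k, d i t • g i) = _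
    rw [← Finset.add_sum_erase Finset.univ (fun i => d i t • g i) (Finset.mem_univ 0), herase]
  -- bound on A \ S : block t = allOnes
  have hAS : ∀ t ∈ A \ S, hammingNorm (block t) = n := by
    intro t ht
    rw [Finset.mem_sdiff, hA, hS, Finset.mem_filter, Finset.mem_filter] at ht
    have h0 : d 0 t = 1 := hone _ ht.1.2
    have hz : ∀ i, i ≠ 0 → d i t = 0 := by
      intro i hi
      by_contra hne
      exact ht.2 ⟨Finset.mem_univ t, i, hi, hne⟩
    have hbt : block t = allOnes n := by
      show (∑ i : Fin k, d i t • g i) = allOnes n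
      rw [Finset.sum_eq_single 0]
      · rw [h0, one_smul, hg0]
      · intro i _ hi; rw [hz i hi, zero_smul]
      · simp
    rw [hbt]
    simp [hammingNorm, allOnes, Finset.filter_true_of_mem]
  -- bound on S : block t ∈ C, nonzero
  have hSb : ∀ t ∈ S, dC ≤ hammingNorm (block t) := by
    intro t ht
    rw [hS, Finset.mem_filter] at ht
    obtain ⟨-, i₀, hi₀, hd₀⟩ := ht
    have hmem : block t ∈ C := by
      refine Submodule.sum_mem C fun i _ => Submodule.smul_mem C _ ?_
      by_cases hi : i = 0
      · rw [hi, hg0]; exact hC1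
      · exact hsub (hgsub i hi)
    have hne : block t ≠ 0 := by
      intro hzero
      rw [hsplit t] at hzero
      by_cases h0 : d 0 t = 0
      · rw [h0, zero_smul, zero_add] at hzero
        exact hd₀ ((Fintype.linearIndependent_iff.mp hgind)
          (fun i => d i.1 t) hzero ⟨i₀, hi₀⟩)
      · rw [hone _ h0, one_smul, hg0] at hzero
        have heq : allOnes n = ∑ i : {i : Fin k // i ≠ 0}, d i.1 t • g i.1 :=
          funext fun s => hpt _ _ (by simpa using congrFun hzero s)
        exact hsub1 (heq ▸ Submodule.sum_mem Csub fun i _ =>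
          Submodule.smul_mem Csub _ (hgsub i.1 i.2))
    exact hdle _ hmem hne
  calc (A \ S).card * n + S.card * dC
      = ∑ _t ∈ A \ S, n + ∑ _t ∈ S, dC := by
        rw [Finset.sum_const, Finset.sum_const, smul_eq_mul, smul_eq_mul]
    _ ≤ ∑ t ∈ A \ S, hammingNorm (block t) + ∑ t ∈ S, hammingNorm (block t) := by
        gcongr with t ht t ht
        · exact (hAS t ht).ge
        · exact hSb t ht
    _ = ∑ t ∈ (A \ S) ∪ S, hammingNorm (block t) := by
        rw [Finset.sum_union Finset.sdiff_disjoint]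
    _ ≤ ∑ t, hammingNorm (block t) := Finset.sum_le_sum_of_subset (Finset.subset_univ _)
end

section
/- Every minimum weight codeword of C^{⊗[r,m]} (for 1 ≤ r ≤ m-1, m ≥ 2) lies in the union A_1 ∪ A_2 ∪ A_3, where A_1 = {d̃ ⊗ g : d̃ ∈ A_min(C^{⊗[r-1,m-1]}), g ∈ A_min(C)}, A_2 = {d ⊗ 𝟙_n + d̃ ⊗ g̃ : d̃ ∈ A_min(C^{⊗[r-1,m-1]}), d ∈ C^{⊗[r,m-1]} with ∅ ≠ supp(d) ⊊ supp(d̃), g̃ ∈ A_min(C) with 𝟙_n + g̃ ∈ A_min(C)}, and A_3 = {d ⊗ 𝟙_n : d ∈ A_min(C^{⊗[r,m-1]})}; conversely every element of A_1 ∪ A_2 ∪ A_3 is a minimum weight codeword of C^{⊗[r,m]}. -/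
set_option linter.unusedSectionVars false
set_option linter.unusedVariables false
set_option maxHeartbeats 1000000
open Finset Submodule Module

lemma zmod2_cases (t : ZMod 2) : t = 0 ∨ t = 1 := by fin_cases t; exacts [Or.inl rfl, Or.inr rfl]

lemma tens2_apply_snoc {n m : ℕ} (d : (Fin m → Fin n) → ZMod 2) (a : Fin n → ZMod 2)
    (i : Fin m → Fin n) (β : Fin n) : tens2 d a (Fin.snoc i β) = d i * a β := by
  simp [tens2, Fin.init_snoc, Fin.snoc_last]

lemma tens2_add_left {n m : ℕ} (d d' : (Fin m → Fin n) → ZMod 2) (a : Fin n → ZMod 2) :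
    tens2 (d + d') a = tens2 d a + tens2 d' a := by
  funext i; simp [tens2]; ring

lemma tens2_smul_left {n m : ℕ} (t : ZMod 2) (d : (Fin m → Fin n) → ZMod 2) (a : Fin n → ZMod 2) :
    tens2 (t • d) a = t • tens2 d a := by
  funext i; simp [tens2]; ring

lemma tens2_zero_left {n m : ℕ} (a : Fin n → ZMod 2) : tens2 (0 : (Fin m → Fin n) → ZMod 2) a = 0 := by
  funext i; simp [tens2]

lemma tens2_add_right {n m : ℕ} (d : (Fin m → Fin n) → ZMod 2) (a a' : Fin n → ZMod 2) :
    tens2 d (a + a') = tens2 d a + tens2 d a' := by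
  funext i; simp [tens2]; ring

lemma tens2_smul_right {n m : ℕ} (t : ZMod 2) (d : (Fin m → Fin n) → ZMod 2) (a : Fin n → ZMod 2) :
    tens2 d (t • a) = t • tens2 d a := by
  funext i; simp [tens2]; ring

/-- the snoc equivalence -/
def snocEquiv (n m : ℕ) : ((Fin m → Fin n) × Fin n) ≃ (Fin (m+1) → Fin n) where
  toFun p := Fin.snoc p.1 p.2
  invFun f := (Fin.init f, f (Fin.last m))
  left_inv p := by simp [Fin.init_snoc, Fin.snoc_last]
  right_inv f := by simp [Fin.snoc_init_self]

lemma hn_eq {N : Type*} [Fintype N] (x : N → ZMod 2) [DecidableEq N] :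
    hammingNorm x = ∑ i, if x i ≠ 0 then 1 else 0 := by
  simp [hammingNorm, Finset.card_filter]

lemma wt_rows {n m : ℕ} (c : (Fin (m+1) → Fin n) → ZMod 2) :
    hammingNorm c = ∑ i : Fin m → Fin n, hammingNorm (fun β => c (Fin.snoc i β)) := by
  rw [hn_eq]
  rw [← Equiv.sum_comp (snocEquiv n m) (fun f => if c f ≠ 0 then 1 else 0)]
  rw [Fintype.sum_prod_type]
  refine Finset.sum_congr rfl fun i _ => ?_
  rw [hn_eq]
  rfl

lemma wt_smul_row {n : ℕ} (t : ZMod 2) (a : Fin n → ZMod 2) :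
    hammingNorm (fun β => t * a β) = if t ≠ 0 then hammingNorm a else 0 := by
  rcases zmod2_cases t with h | h <;> subst h <;> simp [hammingNorm]

lemma wt_tens2 {n m : ℕ} (d : (Fin m → Fin n) → ZMod 2) (a : Fin n → ZMod 2) :
    hammingNorm (tens2 d a) = hammingNorm d * hammingNorm a := by
  rw [wt_rows]
  have : ∀ i : Fin m → Fin n, hammingNorm (fun β => tens2 d a (Fin.snoc i β))
      = if d i ≠ 0 then hammingNorm a else 0 := by
    intro i
    simp only [tens2_apply_snoc]
    exact wt_smul_row (d i) a
  simp only [this]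
  rw [Finset.sum_ite, Finset.sum_const, Finset.sum_const_zero]
  simp [hammingNorm, mul_comm]

open Finset
section
variable {n k : ℕ} [NeZero k] {m : ℕ} (g : Fin k → Fin n → ZMod 2)

lemma bvec_snoc (J : Fin m → Fin k) (j : Fin k) :
    bvec g (Fin.snoc J j) = tens2 (bvec g J) (g j) := by
  funext i
  simp only [bvec, tens2, Fin.prod_univ_castSucc, Fin.snoc_castSucc, Fin.snoc_last, Fin.init]

lemma card_filter_snoc (J : Fin m → Fin k) (j : Fin k) :
    (univ.filter fun ℓ : Fin (m+1) => (Fin.snoc J j : Fin (m+1) → Fin k) ℓ ≠ 0).card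
      = (univ.filter fun ℓ : Fin m => J ℓ ≠ 0).card + (if j ≠ 0 then 1 else 0) := by
  simp only [card_filter]
  rw [Fin.sum_univ_castSucc]
  simp [Fin.snoc_castSucc, Fin.snoc_last]

lemma tens2_mem {s r : ℕ} (j : Fin k) (hsr : s + (if j ≠ 0 then 1 else 0) ≤ r)
    {d : (Fin m → Fin n) → ZMod 2} (hd : d ∈ subprod n k s (Fin m) g) :
    tens2 d (g j) ∈ subprod n k r (Fin (m+1)) g := by
  induction hd using Submodule.span_induction with
  | mem x hx =>
      obtain ⟨J, hJ, rfl⟩ := hx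
      rw [← bvec_snoc]
      apply Submodule.subset_span
      exact ⟨Fin.snoc J j, by rw [card_filter_snoc]; omega, rfl⟩
  | zero => rw [tens2_zero_left]; exact Submodule.zero_mem _
  | add x y hx hy ihx ihy => rw [tens2_add_left]; exact Submodule.add_mem _ ihx ihy
  | smul t x hx ihx => rw [tens2_smul_left]; exact Submodule.smul_mem _ _ ihx

/-- decomposition of elements of `subprod` over `Fin (m+1)`. -/
lemma subprod_decomp {r : ℕ} (hr : 1 ≤ r) {c : (Fin (m+1) → Fin n) → ZMod 2}
    (hc : c ∈ subprod n k r (Fin (m+1)) g) :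
    ∃ dv : Fin k → (Fin m → Fin n) → ZMod 2,
      dv 0 ∈ subprod n k r (Fin m) g ∧ (∀ j, j ≠ 0 → dv j ∈ subprod n k (r-1) (Fin m) g) ∧
      c = ∑ j, tens2 (dv j) (g j) := by
  induction hc using Submodule.span_induction with
  | mem x hx =>
      obtain ⟨J, hJ, rfl⟩ := hx
      refine ⟨fun j => if j = J (Fin.last m) then bvec g (Fin.init J) else 0, ?_, ?_, ?_⟩
      · beta_reduce
        split
        · apply Submodule.subset_span
          refine ⟨Fin.init J, ?_, rfl⟩
          have := card_filter_snoc (Fin.init J) (J (Fin.last m))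
          rw [Fin.snoc_init_self] at this
          omega
        · exact Submodule.zero_mem _
      · intro j hj
        beta_reduce
        split
        · rename_i hje
          apply Submodule.subset_span
          refine ⟨Fin.init J, ?_, rfl⟩
          have := card_filter_snoc (Fin.init J) (J (Fin.last m))
          rw [Fin.snoc_init_self] at this
          rw [hje] at hj
          rw [if_pos hj] at this
          omega
        · exact Submodule.zero_mem _
      · beta_reduce
        rw [Finset.sum_eq_single (J (Fin.last m))]
        · rw [if_pos rfl, ← bvec_snoc, Fin.snoc_init_self]
        · intro b _ hb; beta_reduce; rw [if_neg hb, tens2_zero_left]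
        · simp
  | zero => exact ⟨0, Submodule.zero_mem _, fun j _ => Submodule.zero_mem _, by
      simp [tens2_zero_left]⟩
  | add x y hx hy ihx ihy =>
      obtain ⟨dv, h0, hj, rfl⟩ := ihx
      obtain ⟨dv', h0', hj', rfl⟩ := ihy
      refine ⟨dv + dv', Submodule.add_mem _ h0 h0',
        fun j hjj => Submodule.add_mem _ (hj j hjj) (hj' j hjj), ?_⟩
      rw [← Finset.sum_add_distrib]
      refine Finset.sum_congr rfl fun j _ => ?_
      rw [Pi.add_apply, tens2_add_left]
  | smul t x hx ihx =>
      obtain ⟨dv, h0, hj, rfl⟩ := ihx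
      refine ⟨t • dv, Submodule.smul_mem _ _ h0,
        fun j hjj => Submodule.smul_mem _ _ (hj j hjj), ?_⟩
      rw [Finset.smul_sum]
      refine Finset.sum_congr rfl fun j _ => ?_
      rw [Pi.smul_apply, tens2_smul_left]

end

open Finset Submodule Module
section
variable {n k : ℕ} [NeZero k]
  {C Csub : Submodule (ZMod 2) (Fin n → ZMod 2)}
  {g : Fin k → Fin n → ZMod 2}

lemma card_ne_zero_subtype : Fintype.card {i : Fin k // i ≠ 0} = k - 1 := by
  rw [Fintype.card_subtype_compl, Fintype.card_subtype_eq]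
  simp

lemma Csub_span (hsubdim : Module.finrank (ZMod 2) Csub = k - 1)
    (hgsub : ∀ i, i ≠ 0 → g i ∈ Csub)
    (hgind : LinearIndependent (ZMod 2) (fun i : {i : Fin k // i ≠ 0} => g i.1)) :
    Csub = Submodule.span (ZMod 2) (Set.range fun i : {i : Fin k // i ≠ 0} => g i.1) := by
  refine (Submodule.eq_of_le_of_finrank_eq ?_ ?_).symm
  · rw [Submodule.span_le]
    rintro - ⟨i, rfl⟩
    exact hgsub i.1 i.2
  · rw [finrank_span_eq_card hgind, card_ne_zero_subtype, hsubdim]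

lemma C_decomp (hk : 2 ≤ k) (hn : allOnes n ≠ 0)
    (hC1 : allOnes n ∈ C) (hCk : Module.finrank (ZMod 2) C = k)
    (hsub : Csub ≤ C) (hsubdim : Module.finrank (ZMod 2) Csub = k - 1)
    (hsub1 : allOnes n ∉ Csub) :
    ∀ x ∈ C, ∃ t : ZMod 2, ∃ s ∈ Csub, x = t • allOnes n + s := by
  set A : Submodule (ZMod 2) (Fin n → ZMod 2) := Submodule.span (ZMod 2) {allOnes n} with hA
  have hle : A ⊔ Csub ≤ C := by
    refine sup_le ?_ hsub
    rw [Submodule.span_le, Set.singleton_subset_iff]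
    exact hC1
  have hinf : A ⊓ Csub = ⊥ := by
    refine (Submodule.eq_bot_iff _).2 fun x hx => ?_
    obtain ⟨hx1, hx2⟩ := hx
    obtain ⟨t, rfl⟩ := Submodule.mem_span_singleton.1 hx1
    rcases zmod2_cases t with h | h <;> subst h
    · simp
    · exfalso; rw [one_smul] at hx2; exact hsub1 hx2
  have hAr : finrank (ZMod 2) A = 1 := finrank_span_singleton hn
  have hsum := Submodule.finrank_sup_add_finrank_inf_eq A Csub
  rw [hinf, hAr, hsubdim] at hsum
  simp only [finrank_bot, add_zero] at hsum
  have heq : A ⊔ Csub = C := Submodule.eq_of_le_of_finrank_eq hle (by rw [hsum, hCk]; omega)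
  intro x hx
  rw [← heq] at hx
  obtain ⟨y, hy, s, hs, rfl⟩ := Submodule.mem_sup.1 hx
  obtain ⟨t, rfl⟩ := Submodule.mem_span_singleton.1 hy
  exact ⟨t, s, hs, rfl⟩

lemma tens2_zero_right {n m : ℕ} (d : (Fin m → Fin n) → ZMod 2) :
    tens2 d (0 : Fin n → ZMod 2) = 0 := by funext i; simp [tens2]

lemma tens2_mem_C {m r : ℕ} (hr : 1 ≤ r) (hk : 2 ≤ k) (hn : allOnes n ≠ 0)
    (hC1 : allOnes n ∈ C) (hCk : Module.finrank (ZMod 2) C = k)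
    (hsub : Csub ≤ C) (hsubdim : Module.finrank (ZMod 2) Csub = k - 1)
    (hsub1 : allOnes n ∉ Csub) (hg0 : g 0 = allOnes n)
    (hgsub : ∀ i, i ≠ 0 → g i ∈ Csub)
    (hgind : LinearIndependent (ZMod 2) (fun i : {i : Fin k // i ≠ 0} => g i.1))
    {dt : (Fin m → Fin n) → ZMod 2} (hdt : dt ∈ subprod n k (r-1) (Fin m) g)
    {gg : Fin n → ZMod 2} (hgg : gg ∈ C) :
    tens2 dt gg ∈ subprod n k r (Fin (m+1)) g := by
  obtain ⟨t, s, hs, rfl⟩ := C_decomp hk hn hC1 hCk hsub hsubdim hsub1 gg hgg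
  rw [tens2_add_right, tens2_smul_right]
  refine Submodule.add_mem _ (Submodule.smul_mem _ _ ?_) ?_
  · rw [← hg0]
    exact tens2_mem g 0 (by simp) hdt
  · rw [Csub_span hsubdim hgsub hgind] at hs
    have key : ∀ x ∈ Submodule.span (ZMod 2)
        (Set.range fun i : {i : Fin k // i ≠ 0} => g i.1),
        tens2 dt x ∈ subprod n k r (Fin (m+1)) g := by
      intro x hx
      induction hx using Submodule.span_induction with
      | mem x hx =>
          obtain ⟨i, rfl⟩ := hx
          exact tens2_mem g i.1 (by rw [if_pos i.2]; omega) hdt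
      | zero => rw [tens2_zero_right]; exact Submodule.zero_mem _
      | add x y hx hy ihx ihy => rw [tens2_add_right]; exact Submodule.add_mem _ ihx ihy
      | smul t x hx ihx => rw [tens2_smul_right]; exact Submodule.smul_mem _ _ ihx
    exact key s hs

end

open Finset Submodule Module
section
variable {n k : ℕ} [NeZero k]
  {C Csub : Submodule (ZMod 2) (Fin n → ZMod 2)}
  {g : Fin k → Fin n → ZMod 2}

lemma wt_allOnes : hammingNorm (allOnes n) = n := by
  simp [hammingNorm, allOnes]

lemma wt_onevec {m : ℕ} :
    hammingNorm (fun _ : Fin m → Fin n => (1 : ZMod 2)) = n ^ m := by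
  simp [hammingNorm]

lemma subprod_zero {m : ℕ} (hg0 : g 0 = allOnes n) {c : (Fin m → Fin n) → ZMod 2}
    (hc : c ∈ subprod n k 0 (Fin m) g) :
    c = 0 ∨ c = fun _ => (1 : ZMod 2) := by
  have hset : {c : (Fin m → Fin n) → ZMod 2 |
      ∃ j : Fin m → Fin k, (univ.filter fun ℓ => j ℓ ≠ 0).card ≤ 0 ∧ c = bvec g j}
      ⊆ {fun _ => (1 : ZMod 2)} := by
    rintro x ⟨j, hj, rfl⟩
    have hj0 : ∀ ℓ, j ℓ = 0 := by
      intro ℓ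
      by_contra hne
      have : ℓ ∈ univ.filter fun ℓ => j ℓ ≠ 0 := by simp [hne]
      have := Finset.card_pos.2 ⟨ℓ, this⟩
      omega
    have : bvec g j = fun _ => (1 : ZMod 2) := by
      funext i
      simp only [bvec, hj0, hg0]
      simp [allOnes]
    simp [this]
  have := Submodule.span_mono hset hc
  rw [Submodule.mem_span_singleton] at this
  obtain ⟨t, rfl⟩ := this
  rcases zmod2_cases t with h | h <;> subst h
  · left; simp
  · right; funext i; simp

lemma subprod_cap {m r : ℕ} :
    subprod n k r (Fin m) g ≤ subprod n k m (Fin m) g := by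
  apply Submodule.span_mono
  rintro x ⟨j, _, rfl⟩
  refine ⟨j, ?_, rfl⟩
  calc (univ.filter fun ℓ => j ℓ ≠ 0).card ≤ univ.card := Finset.card_filter_le _ _
    _ = m := by simp

lemma c_apply_snoc {m : ℕ} (dv : Fin k → (Fin m → Fin n) → ZMod 2)
    (i : Fin m → Fin n) (β : Fin n) :
    (∑ j, tens2 (dv j) (g j)) (Fin.snoc i β) = ∑ j, dv j i * g j β := by
  rw [Finset.sum_apply]
  exact Finset.sum_congr rfl fun j _ => tens2_apply_snoc _ _ _ _

lemma dmin_lb (hC1 : allOnes n ∈ C)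
    (hsub : Csub ≤ C) (hsub1 : allOnes n ∉ Csub)
    (hg0 : g 0 = allOnes n) (hgsub : ∀ i, i ≠ 0 → g i ∈ Csub)
    (dC : ℕ) (hdle : ∀ x ∈ C, x ≠ 0 → dC ≤ hammingNorm x)
    (hd1 : 1 ≤ dC) (hdn : dC ≤ n) :
    ∀ m r, r ≤ m → ∀ c ∈ subprod n k r (Fin m) g, c ≠ 0 →
      dC ^ r * n ^ (m - r) ≤ hammingNorm c := by
  intro m
  induction m with
  | zero =>
      intro r hr c hc hne
      interval_cases r
      rcases subprod_zero hg0 hc with h | h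
      · exact absurd h hne
      · subst h; rw [wt_onevec]; simp
  | succ m ih =>
      intro r hr c hc hne
      rcases Nat.eq_zero_or_pos r with hr0 | hr1
      · subst hr0
        rcases subprod_zero hg0 hc with h | h
        · exact absurd h hne
        · subst h; rw [wt_onevec]; simp
      obtain ⟨dv, h0, hj, rfl⟩ := subprod_decomp g hr1 hc
      set c := ∑ j, tens2 (dv j) (g j) with hcdef
      -- the "row" decomposition
      set v : (Fin m → Fin n) → Fin n → ZMod 2 :=
        fun i β => ∑ j ∈ univ.erase 0, dv j i * g j β with hv
      have hrow : ∀ i : Fin m → Fin n,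
          (fun β => c (Fin.snoc i β)) = dv 0 i • allOnes n + v i := by
        intro i
        funext β
        rw [hcdef, c_apply_snoc]
        rw [← Finset.add_sum_erase _ _ (Finset.mem_univ (0 : Fin k))]
        simp [hg0, allOnes, hv]
      have hvC : ∀ i, v i ∈ Csub := by
        intro i
        have : v i = ∑ j ∈ univ.erase 0, dv j i • g j := by
          funext β; rw [Finset.sum_apply]; rfl
        rw [this]
        exact Submodule.sum_mem _ fun j hjm =>
          Submodule.smul_mem _ _ (hgsub j (Finset.ne_of_mem_erase hjm))
      have hrowC : ∀ i, (fun β => c (Fin.snoc i β)) ∈ C := by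
        intro i
        rw [hrow i]
        exact Submodule.add_mem _ (Submodule.smul_mem _ _ hC1) (hsub (hvC i))
      have hrow_ne : ∀ i, v i ≠ 0 → (fun β => c (Fin.snoc i β)) ≠ 0 := by
        intro i hvi h0'
        rw [hrow i] at h0'
        rcases zmod2_cases (dv 0 i) with h | h <;> rw [h] at h0'
        · rw [zero_smul, zero_add] at h0'; exact hvi h0'
        · rw [one_smul] at h0'
          have hvA : v i = allOnes n := by
            funext β
            have hb := congrFun h0' β
            simp only [Pi.add_apply, allOnes, Pi.zero_apply] at hb ⊢
            rcases zmod2_cases (v i β) with hh | hh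
            · rw [hh] at hb; exact absurd hb (by decide)
            · rw [hh]
          exact hsub1 (hvA ▸ hvC i)
      by_cases hV : ∀ i, v i = 0
      · -- c = tens2 (dv 0) (allOnes n)
        have hceq : c = tens2 (dv 0) (allOnes n) := by
          funext f
          have := hrow (Fin.init f)
          have h2 := congrFun this (f (Fin.last m))
          rw [Fin.snoc_init_self] at h2
          rw [h2, hV]
          simp [tens2, allOnes]
        have hwt : hammingNorm c = hammingNorm (dv 0) * n := by
          rw [hceq, wt_tens2, wt_allOnes]
        have hd0ne : dv 0 ≠ 0 := by
          intro h; apply hne; rw [hceq, h, tens2_zero_left]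
        rcases Nat.lt_or_ge r (m+1) with hrm | hrm
        · have := ih r (by omega) (dv 0) h0 hd0ne
          rw [hwt]
          calc dC ^ r * n ^ (m + 1 - r) = dC ^ r * n ^ (m - r) * n := by
                rw [mul_assoc, ← pow_succ]
                congr 2
                omega
            _ ≤ hammingNorm (dv 0) * n := by
                exact Nat.mul_le_mul_right n this
        · -- r = m + 1
          have hrm' : r = m + 1 := by omega
          have := ih m le_rfl (dv 0) (subprod_cap h0) hd0ne
          rw [hwt, hrm']
          simp only [Nat.sub_self, pow_zero, mul_one]
          calc dC ^ (m+1) = dC ^ m * dC := by rw [pow_succ]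
            _ ≤ hammingNorm (dv 0) * n := by
                simp only [Nat.sub_self, pow_zero, mul_one] at this
                exact Nat.mul_le_mul this hdn
      · push_neg at hV
        obtain ⟨i₀, hi₀⟩ := hV
        have hβ₀ : ∃ β₀, v i₀ β₀ ≠ 0 := by
          by_contra h
          push_neg at h
          exact hi₀ (funext fun β => h β)
        obtain ⟨β₀, hβ₀⟩ := hβ₀
        set u : (Fin m → Fin n) → ZMod 2 := fun i => v i β₀ with hu
        have huMem : u ∈ subprod n k (r-1) (Fin m) g := by
          have : u = ∑ j ∈ univ.erase 0, g j β₀ • dv j := by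
            funext i; rw [Finset.sum_apply]
            simp only [hu, hv, Pi.smul_apply, smul_eq_mul]
            exact Finset.sum_congr rfl fun j _ => mul_comm _ _
          rw [this]
          exact Submodule.sum_mem _ fun j hjm =>
            Submodule.smul_mem _ _ (hj j (Finset.ne_of_mem_erase hjm))
        have huNe : u ≠ 0 := fun h => hβ₀ (congrFun h i₀)
        have huWt := ih (r-1) (by omega) u huMem huNe
        set S := univ.filter (fun i : Fin m → Fin n => v i ≠ 0) with hS
        have hScard : dC ^ (r-1) * n ^ (m - (r-1)) ≤ S.card := by
          refine le_trans huWt ?_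
          refine Finset.card_le_card ?_
          intro i hi
          simp only [hammingNorm, Finset.mem_filter, Finset.mem_univ, true_and] at hi
          simp only [hS, Finset.mem_filter, Finset.mem_univ, true_and]
          intro h; exact hi (congrFun h β₀)
        have hwt : dC * S.card ≤ hammingNorm c := by
          rw [wt_rows]
          calc dC * S.card = ∑ _i ∈ S, dC := by rw [Finset.sum_const, smul_eq_mul, mul_comm]
            _ ≤ ∑ i ∈ S, hammingNorm (fun β => c (Fin.snoc i β)) := by
                refine Finset.sum_le_sum fun i hi => ?_
                simp only [hS, Finset.mem_filter] at hi
                exact hdle _ (hrowC i) (hrow_ne i hi.2)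
            _ ≤ ∑ i, hammingNorm (fun β => c (Fin.snoc i β)) :=
                Finset.sum_le_sum_of_subset (Finset.filter_subset _ _)
        calc dC ^ r * n ^ (m + 1 - r) = dC * (dC ^ (r-1) * n ^ (m - (r-1))) := by
              rw [← mul_assoc, ← pow_succ']
              congr 2
              · omega
              · omega
          _ ≤ dC * S.card := Nat.mul_le_mul_left dC hScard
          _ ≤ hammingNorm c := hwt

end

theorem stmt16 (n k : ℕ) [NeZero k] (hk : 2 ≤ k)
    (C Csub : Submodule (ZMod 2) (Fin n → ZMod 2))
    (hC1 : allOnes n ∈ C) (hCk : Module.finrank (ZMod 2) C = k)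
    (hsub : Csub ≤ C) (hsubdim : Module.finrank (ZMod 2) Csub = k - 1)
    (hsub1 : allOnes n ∉ Csub)
    (g : Fin k → Fin n → ZMod 2) (hg0 : g 0 = allOnes n)
    (hgsub : ∀ i, i ≠ 0 → g i ∈ Csub)
    (hgind : LinearIndependent (ZMod 2) (fun i : {i : Fin k // i ≠ 0} => g i.1))
    (dC : ℕ)
    (hdle : ∀ x ∈ C, x ≠ 0 → dC ≤ hammingNorm x)
    (hdex : ∃ x ∈ C, x ≠ 0 ∧ hammingNorm x = dC)
    (m r : ℕ) (hr1 : 1 ≤ r) (hr : r ≤ m) :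
    {c | c ∈ subprod n k r (Fin (m + 1)) g ∧
        hammingNorm c = dC ^ r * n ^ (m + 1 - r)} =
      -- A₁
      {c | ∃ dt, (dt ∈ subprod n k (r - 1) (Fin m) g ∧
            hammingNorm dt = dC ^ (r - 1) * n ^ (m - (r - 1))) ∧
          ∃ gg, (gg ∈ C ∧ hammingNorm gg = dC) ∧ c = tens2 dt gg} ∪
      -- A₂
      {c | ∃ dt, (dt ∈ subprod n k (r - 1) (Fin m) g ∧
            hammingNorm dt = dC ^ (r - 1) * n ^ (m - (r - 1))) ∧
          ∃ dd ∈ subprod n k r (Fin m) g,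
            Function.support dd ≠ ∅ ∧
            Function.support dd ⊂ Function.support dt ∧
          ∃ gt, (gt ∈ C ∧ hammingNorm gt = dC) ∧
            (allOnes n + gt ∈ C ∧ hammingNorm (allOnes n + gt) = dC) ∧
            c = tens2 dd (allOnes n) + tens2 dt gt} ∪
      -- A₃
      {c | ∃ dd, (dd ∈ subprod n k r (Fin m) g ∧
            hammingNorm dd = dC ^ r * n ^ (m - r)) ∧
          c = tens2 dd (allOnes n)} := by
  -- basic numeric facts
  obtain ⟨x₀, hx₀C, hx₀ne, hx₀wt⟩ := hdex
  have hd1 : 1 ≤ dC := by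
    rw [← hx₀wt]
    rcases Nat.eq_zero_or_pos (hammingNorm x₀) with h | h
    · exact absurd ((hammingNorm_eq_zero).1 h) hx₀ne
    · exact h
  have hdn : dC ≤ n := by
    rw [← hx₀wt]
    calc hammingNorm x₀ ≤ (univ : Finset (Fin n)).card := Finset.card_filter_le _ _
      _ = n := by simp
  have hn1 : 1 ≤ n := by
    rcases Nat.eq_zero_or_pos n with h | h
    · subst h; exact absurd (funext fun i => i.elim0) hx₀ne
    · exact h
  have hallne : allOnes n ≠ 0 := by
    intro h
    have := congrFun h ⟨0, hn1⟩
    simp [allOnes] at this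
  have hEr : m - (r - 1) = m + 1 - r := by omega
  have hEd : dC ^ (r - 1) * dC = dC ^ r := by
    rw [← pow_succ]; congr 1; omega
  ext c
  simp only [Set.mem_setOf_eq, Set.mem_union]
  constructor
  · rintro ⟨hc, hwt⟩
    obtain ⟨dv, h0, hj, rfl⟩ := subprod_decomp g hr1 hc
    set c := ∑ j, tens2 (dv j) (g j) with hcdef
    set v : (Fin m → Fin n) → Fin n → ZMod 2 :=
      fun i β => ∑ j ∈ univ.erase 0, dv j i * g j β with hv
    have hrow : ∀ i : Fin m → Fin n,
        (fun β => c (Fin.snoc i β)) = dv 0 i • allOnes n + v i := by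
      intro i
      funext β
      rw [hcdef, c_apply_snoc]
      rw [← Finset.add_sum_erase _ _ (Finset.mem_univ (0 : Fin k))]
      simp [hg0, allOnes, hv]
    have hvC : ∀ i, v i ∈ Csub := by
      intro i
      have : v i = ∑ j ∈ univ.erase 0, dv j i • g j := by
        funext β; rw [Finset.sum_apply]; rfl
      rw [this]
      exact Submodule.sum_mem _ fun j hjm =>
        Submodule.smul_mem _ _ (hgsub j (Finset.ne_of_mem_erase hjm))
    have hrowC : ∀ i, (fun β => c (Fin.snoc i β)) ∈ C := by
      intro i
      rw [hrow i]
      exact Submodule.add_mem _ (Submodule.smul_mem _ _ hC1) (hsub (hvC i))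
    have hrow_ne : ∀ i, v i ≠ 0 → (fun β => c (Fin.snoc i β)) ≠ 0 := by
      intro i hvi h0'
      rw [hrow i] at h0'
      rcases zmod2_cases (dv 0 i) with h | h <;> rw [h] at h0'
      · rw [zero_smul, zero_add] at h0'; exact hvi h0'
      · rw [one_smul] at h0'
        have hvA : v i = allOnes n := by
          funext β
          have hb := congrFun h0' β
          simp only [Pi.add_apply, allOnes, Pi.zero_apply] at hb ⊢
          rcases zmod2_cases (v i β) with hh | hh
          · rw [hh] at hb; exact absurd hb (by decide)
          · rw [hh]
        exact hsub1 (hvA ▸ hvC i)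
    by_cases hV : ∀ i, v i = 0
    · -- A₃ case : c = dv 0 ⊗ 1
      have hceq : c = tens2 (dv 0) (allOnes n) := by
        funext f
        have h2 := congrFun (hrow (Fin.init f)) (f (Fin.last m))
        rw [Fin.snoc_init_self] at h2
        rw [h2, hV]
        simp [tens2, allOnes]
      right
      refine ⟨dv 0, ⟨h0, ?_⟩, hceq⟩
      have hwc : hammingNorm c = hammingNorm (dv 0) * n := by
        rw [hceq, wt_tens2, wt_allOnes]
      have harr : dC ^ r * n ^ (m + 1 - r) = dC ^ r * n ^ (m - r) * n := by
        rw [mul_assoc, ← pow_succ]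
        congr 2
        omega
      refine Nat.eq_of_mul_eq_mul_right hn1 ?_
      rw [← hwc, hwt, harr]
    · -- main case
      push_neg at hV
      obtain ⟨i₀, hi₀⟩ := hV
      have hβ₀ : ∃ β₀, v i₀ β₀ ≠ 0 := by
        by_contra h
        push_neg at h
        exact hi₀ (funext fun β => h β)
      obtain ⟨β₀, hβ₀⟩ := hβ₀
      set N := dC ^ (r - 1) * n ^ (m - (r - 1)) with hN
      set u : Fin n → (Fin m → Fin n) → ZMod 2 := fun β i => v i β with hu
      have huMem : ∀ β, u β ∈ subprod n k (r-1) (Fin m) g := by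
        intro β
        have : u β = ∑ j ∈ univ.erase 0, g j β • dv j := by
          funext i; rw [Finset.sum_apply]
          simp only [hu, hv, Pi.smul_apply, smul_eq_mul]
          exact Finset.sum_congr rfl fun j _ => mul_comm _ _
        rw [this]
        exact Submodule.sum_mem _ fun j hjm =>
          Submodule.smul_mem _ _ (hj j (Finset.ne_of_mem_erase hjm))
      have huWt : ∀ β, u β ≠ 0 → N ≤ hammingNorm (u β) := fun β h =>
        dmin_lb hC1 hsub hsub1 hg0 hgsub dC hdle hd1 hdn m (r-1) (by omega) (u β) (huMem β) h
      set S := univ.filter (fun i : Fin m → Fin n => v i ≠ 0) with hS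
      have hSsupp : ∀ β, (univ.filter fun i => u β i ≠ 0) ⊆ S := by
        intro β i hi
        simp only [Finset.mem_filter, Finset.mem_univ, true_and] at hi
        simp only [hS, Finset.mem_filter, Finset.mem_univ, true_and]
        intro h; exact hi (by rw [hu]; simp only [h, Pi.zero_apply])
      have huβ₀ : u β₀ ≠ 0 := fun h => hβ₀ (congrFun h i₀)
      have hScard : N ≤ S.card := by
        refine le_trans (huWt β₀ huβ₀) ?_
        exact Finset.card_le_card (hSsupp β₀)
      have htot : ∑ i, hammingNorm (fun β => c (Fin.snoc i β)) = dC * N := by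
        rw [← wt_rows, hwt, hN, hEr, ← mul_assoc, mul_comm dC (dC ^ (r-1)), hEd]
      have hrow_ge : ∀ i ∈ S, dC ≤ hammingNorm (fun β => c (Fin.snoc i β)) := by
        intro i hi
        simp only [hS, Finset.mem_filter] at hi
        exact hdle _ (hrowC i) (hrow_ne i hi.2)
      have h1 : dC * S.card ≤ ∑ i ∈ S, hammingNorm (fun β => c (Fin.snoc i β)) := by
        calc dC * S.card = ∑ _i ∈ S, dC := by rw [Finset.sum_const, smul_eq_mul, mul_comm]
          _ ≤ _ := Finset.sum_le_sum hrow_ge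
      have hle2 : ∑ i ∈ S, hammingNorm (fun β => c (Fin.snoc i β)) ≤ dC * N := by
        rw [← htot]
        exact Finset.sum_le_sum_of_subset (Finset.filter_subset _ _)
      have hSN : S.card = N := by
        have hcle : S.card ≤ N := Nat.le_of_mul_le_mul_left (le_trans h1 hle2) hd1
        omega
      have hsumS : ∑ i ∈ S, hammingNorm (fun β => c (Fin.snoc i β)) = dC * N := by
        refine le_antisymm hle2 ?_
        rw [← hSN] at *
        exact h1
      have hout : ∀ i, v i = 0 → (fun β => c (Fin.snoc i β)) = 0 := by
        have hsplit := Finset.sum_filter_add_sum_filter_not univ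
          (fun i : Fin m → Fin n => v i ≠ 0)
          (fun i => hammingNorm (fun β => c (Fin.snoc i β)))
        rw [← hS] at hsplit
        rw [hsumS, htot] at hsplit
        have hzero : ∑ i ∈ univ.filter (fun i : Fin m → Fin n => ¬ v i ≠ 0),
            hammingNorm (fun β => c (Fin.snoc i β)) = 0 := by omega
        intro i hvi
        have hi : i ∈ univ.filter (fun i : Fin m → Fin n => ¬ v i ≠ 0) := by
          simp [hvi]
        have := (Finset.sum_eq_zero_iff.1 hzero) i hi
        exact hammingNorm_eq_zero.1 this
      have hd00 : ∀ i, v i = 0 → dv 0 i = 0 := by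
        intro i hvi
        have h := hout i hvi
        rw [hrow i, hvi, add_zero] at h
        rcases zmod2_cases (dv 0 i) with hh | hh
        · exact hh
        · rw [hh, one_smul] at h
          exact absurd h hallne
      have hroweq : ∀ i ∈ S, hammingNorm (fun β => c (Fin.snoc i β)) = dC := by
        by_contra hcon
        push_neg at hcon
        obtain ⟨i₁, hi₁S, hi₁⟩ := hcon
        have hlt : ∑ _i ∈ S, dC < ∑ i ∈ S, hammingNorm (fun β => c (Fin.snoc i β)) := by
          refine Finset.sum_lt_sum hrow_ge ⟨i₁, hi₁S, ?_⟩
          exact lt_of_le_of_ne (hrow_ge i₁ hi₁S) (Ne.symm hi₁)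
        rw [Finset.sum_const, smul_eq_mul, mul_comm, hSN, hsumS] at hlt
        omega
      have hufull : ∀ β, u β ≠ 0 → (univ.filter fun i => u β i ≠ 0) = S := by
        intro β h
        refine Finset.eq_of_subset_of_card_le (hSsupp β) ?_
        rw [hSN]
        exact huWt β h
      set dtil := u β₀ with hdtil
      have hdtils : ∀ i, dtil i ≠ 0 ↔ i ∈ S := by
        intro i
        rw [← hufull β₀ huβ₀]
        simp [hdtil]
      have hi₀S : i₀ ∈ S := by simp [hS, hi₀]
      have hueq : ∀ β, u β ≠ 0 → u β = dtil := by
        intro β h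
        funext i
        have h1' : u β i ≠ 0 ↔ i ∈ S := by
          rw [← hufull β h]; simp
        by_cases hiS : i ∈ S
        · have ha := h1'.2 hiS
          have hb := (hdtils i).2 hiS
          rcases zmod2_cases (u β i) with hh | hh
          · exact absurd hh ha
          · rcases zmod2_cases (dtil i) with hh' | hh'
            · exact absurd hh' hb
            · rw [hh, hh']
        · have ha : u β i = 0 := by
            by_contra hne'; exact hiS (h1'.1 hne')
          have hb : dtil i = 0 := by
            by_contra hne'; exact hiS ((hdtils i).1 hne')
          rw [ha, hb]
      set e : Fin n → ZMod 2 := v i₀ with he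
      have hdtili₀ : dtil i₀ = 1 := by
        have := (hdtils i₀).2 hi₀S
        rcases zmod2_cases (dtil i₀) with hh | hh
        · exact absurd hh this
        · exact hh
      have hue : ∀ β i, u β i = dtil i * e β := by
        intro β i
        have heβ : e β = u β i₀ := rfl
        by_cases hβz : u β = 0
        · rw [hβz]
          rw [heβ, hβz]
          simp
        · rw [hueq β hβz, heβ, hueq β hβz, hdtili₀, mul_one]
      have hvd : ∀ i, v i = fun β => dtil i * e β := by
        intro i
        funext β
        exact hue β i
      have hceq : c = tens2 (dv 0) (allOnes n) + tens2 dtil e := by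
        funext f
        have h2 := congrFun (hrow (Fin.init f)) (f (Fin.last m))
        rw [Fin.snoc_init_self] at h2
        rw [h2]
        simp only [Pi.add_apply, tens2, allOnes, Pi.smul_apply, smul_eq_mul, mul_one]
        rw [hvd (Fin.init f)]
      have hdtilm : dtil ∈ subprod n k (r-1) (Fin m) g := huMem β₀
      have hdtilw : hammingNorm dtil = N := by
        have : hammingNorm dtil = (univ.filter fun i => dtil i ≠ 0).card := rfl
        rw [this, hufull β₀ huβ₀, hSN]
      have heC : e ∈ C := hsub (hvC i₀)
      have hrowS : ∀ i ∈ S, (fun β => c (Fin.snoc i β)) = dv 0 i • allOnes n + e := by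
        intro i hiS
        rw [hrow i, hvd i]
        have hdone : dtil i = 1 := by
          have := (hdtils i).2 hiS
          rcases zmod2_cases (dtil i) with hh | hh
          · exact absurd hh this
          · exact hh
        congr 1
        funext β
        rw [hdone, one_mul]
      have hwte : ∀ i ∈ S, dv 0 i = 0 → hammingNorm e = dC := by
        intro i hiS hz
        have := hroweq i hiS
        rw [hrowS i hiS, hz, zero_smul, zero_add] at this
        exact this
      have hwte' : ∀ i ∈ S, dv 0 i = 1 → hammingNorm (allOnes n + e) = dC := by
        intro i hiS ho
        have := hroweq i hiS
        rw [hrowS i hiS, ho, one_smul] at this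
        exact this
      have hsuppsub : ∀ i, dv 0 i ≠ 0 → i ∈ S := by
        intro i hne'
        simp only [hS, Finset.mem_filter, Finset.mem_univ, true_and]
        intro hvi
        exact hne' (hd00 i hvi)
      by_cases hA0 : dv 0 = 0
      · -- A₁ with gg = e
        have hiS0 : dv 0 i₀ = 0 := by rw [hA0]; rfl
        left; left
        refine ⟨dtil, ⟨hdtilm, by rw [hdtilw, hN]⟩, e, ⟨heC, hwte i₀ hi₀S hiS0⟩, ?_⟩
        rw [hceq, hA0, tens2_zero_left, zero_add]
      by_cases hAS : ∀ i ∈ S, dv 0 i ≠ 0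
      · -- A₁ with gg = allOnes + e
        have hdveq : dv 0 = dtil := by
          funext i
          by_cases hiS : i ∈ S
          · have ha := hAS i hiS
            have hb := (hdtils i).2 hiS
            rcases zmod2_cases (dv 0 i) with hh | hh
            · exact absurd hh ha
            · rcases zmod2_cases (dtil i) with hh' | hh'
              · exact absurd hh' hb
              · rw [hh, hh']
          · have ha : dv 0 i = 0 := by
              by_contra hne'; exact hiS (hsuppsub i hne')
            have hb : dtil i = 0 := by
              by_contra hne'; exact hiS ((hdtils i).1 hne')
            rw [ha, hb]
        have hone : dv 0 i₀ = 1 := by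
          have := hAS i₀ hi₀S
          rcases zmod2_cases (dv 0 i₀) with hh | hh
          · exact absurd hh this
          · exact hh
        left; left
        refine ⟨dtil, ⟨hdtilm, by rw [hdtilw, hN]⟩, allOnes n + e,
          ⟨Submodule.add_mem _ hC1 heC, hwte' i₀ hi₀S hone⟩, ?_⟩
        rw [hceq, hdveq, tens2_add_right]
      · -- A₂
        push_neg at hAS
        obtain ⟨i₁, hi₁S, hi₁⟩ := hAS
        have hex2 : ∃ i₂, dv 0 i₂ ≠ 0 := by
          by_contra hcon
          push_neg at hcon
          exact hA0 (funext fun i => hcon i)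
        obtain ⟨i₂, hi₂⟩ := hex2
        have hi₂S : i₂ ∈ S := hsuppsub i₂ hi₂
        have hone : dv 0 i₂ = 1 := by
          rcases zmod2_cases (dv 0 i₂) with hh | hh
          · exact absurd hh hi₂
          · exact hh
        left; right
        refine ⟨dtil, ⟨hdtilm, by rw [hdtilw, hN]⟩, dv 0, h0, ?_, ?_, e,
          ⟨heC, hwte i₁ hi₁S hi₁⟩,
          ⟨Submodule.add_mem _ hC1 heC, hwte' i₂ hi₂S hone⟩, hceq⟩
        · intro hcon
          rw [Function.support_eq_empty_iff] at hcon
          exact hA0 hcon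
        · rw [Set.ssubset_def]
          constructor
          · intro i hi
            have hiS := hsuppsub i hi
            exact (hdtils i).2 hiS
          · intro hcon
            have := hcon ((hdtils i₁).2 hi₁S)
            exact this hi₁
  · rintro ((⟨dt, ⟨hdtm, hdtw⟩, gg, ⟨hggC, hggw⟩, rfl⟩ |
        ⟨dt, ⟨hdtm, hdtw⟩, dd, hddm, hddne, hddsub, gt, ⟨hgtC, hgtw⟩, ⟨hgtC', hgtw'⟩, rfl⟩) |
        ⟨dd, ⟨hddm, hddw⟩, rfl⟩)
    · -- A₁
      refine ⟨tens2_mem_C hr1 hk hallne hC1 hCk hsub hsubdim hsub1 hg0 hgsub hgind hdtm hggC, ?_⟩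
      rw [wt_tens2, hdtw, hggw, hEr, mul_right_comm, hEd]
    · -- A₂
      constructor
      · refine Submodule.add_mem _ ?_
          (tens2_mem_C hr1 hk hallne hC1 hCk hsub hsubdim hsub1 hg0 hgsub hgind hdtm hgtC)
        rw [← hg0]
        exact tens2_mem g 0 (by simp) hddm
      · -- weight computation via rows
        rw [wt_rows]
        have hsupp : ∀ i, dt i = 0 → dd i = 0 := by
          intro i hi
          by_contra hne
          exact (hddsub.1 hne) hi
        have hrw : ∀ i : Fin m → Fin n,
            hammingNorm (fun β => (tens2 dd (allOnes n) + tens2 dt gt) (Fin.snoc i β))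
              = if dt i ≠ 0 then dC else 0 := by
          intro i
          have hfun : (fun β => (tens2 dd (allOnes n) + tens2 dt gt) (Fin.snoc i β))
              = fun β => dd i * allOnes n β + dt i * gt β := by
            funext β
            rw [Pi.add_apply, tens2_apply_snoc, tens2_apply_snoc]
          rw [hfun]
          rcases zmod2_cases (dt i) with h | h <;> rw [h]
          · rw [if_neg (by simp)]
            rw [hsupp i h]
            simp [hammingNorm]
          · rw [if_pos (by simp)]
            rcases zmod2_cases (dd i) with h' | h' <;> rw [h']
            · simp only [zero_mul, zero_add, one_mul]
              exact hgtw
            · simp only [one_mul]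
              exact hgtw'
        simp only [hrw]
        rw [Finset.sum_ite, Finset.sum_const, Finset.sum_const_zero, add_zero, smul_eq_mul]
        have : (univ.filter fun i : Fin m → Fin n => dt i ≠ 0).card = hammingNorm dt := rfl
        rw [this, hdtw, hEr, mul_right_comm, hEd]
    · -- A₃
      constructor
      · rw [← hg0]
        exact tens2_mem g 0 (by simp) hddm
      · rw [wt_tens2, hddw, wt_allOnes, mul_assoc, ← pow_succ]
        congr 2
        omega
end
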